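/- arXiv:1510.05592 — 10 statements merged into one kernel-verified Lean document; each statement's English description precedes it below -/
import Mathlib

section
/- For any countable group Γ, the set of amenable actions is a Gδ subset of S(Γ,X). -/
open TopologicalSpace

set_option maxHeartbeats 1000000

/-- The group structure on the homeomorphism group of `X`,
with `(f * g) x = f (g x)`. -/
instance homeoGroup (X : Type*) [TopologicalSpace X] : Group (X ≃ₜ X) where
  mul f g := g.trans f
  one := Homeomorph.refl X
  inv := Homeomorph.symm
  mul_assoc _ _ _ := Homeomorph.ext fun _ => rfl
  one_mul _ := Homeomorph.ext fun _ => rfl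
  mul_one _ := Homeomorph.ext fun _ => rfl
  inv_mul_cancel f := Homeomorph.ext fun x => f.symm_apply_apply x

/-- The topology on `Homeo(X)` of uniform convergence of a homeomorphism together with
its inverse: for a compact metrizable space `X` the compact-open topology on `C(X, X)`
is the topology of uniform convergence, and we pull back the product topology along
`φ ↦ (φ, φ⁻¹)`. -/
instance homeoTopology (X : Type*) [TopologicalSpace X] : TopologicalSpace (X ≃ₜ X) :=
  TopologicalSpace.induced
    (fun φ : X ≃ₜ X => ((φ : C(X, X)), (φ.symm : C(X, X)))) inferInstance

/-- The space `S(Γ, X)` of actions of `Γ` on `X`, topologized as a subspace of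
the product space `∏_Γ Homeo(X)`. -/
instance actionSpaceTopology (Γ X : Type*) [Group Γ] [TopologicalSpace X] :
    TopologicalSpace (Γ →* (X ≃ₜ X)) :=
  TopologicalSpace.induced (fun α : Γ →* (X ≃ₜ X) => (α : Γ → X ≃ₜ X)) inferInstance

instance : Fact ((1 : ENNReal) ≤ 1) := ⟨le_rfl⟩

/-- An action `α` of `Γ` on `X` is amenable if for every `ε > 0` and every finite
subset `S ⊆ Γ` there is a continuous map `μ : X → Prob(Γ) ⊆ ℓ¹(Γ)`, `x ↦ μ^x`, with
`‖s·μ^x − μ^{α_s x}‖₁ < ε` for all `s ∈ S` and `x ∈ X` (here `(s·μ^x)(t) = μ^x(s⁻¹t)`). -/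
def IsAmenableAction {Γ X : Type*} [Group Γ] [TopologicalSpace X]
    (α : Γ →* (X ≃ₜ X)) : Prop :=
  ∀ ε : ℝ, 0 < ε → ∀ S : Finset Γ,
    ∃ μ : C(X, ↥(lp (fun _ : Γ => ℝ) 1)),
      (∀ (x : X) (t : Γ), 0 ≤ μ x t) ∧
      (∀ x : X, ‖μ x‖ = 1) ∧
      ∀ s ∈ S, ∀ x : X, (∑' t : Γ, |μ x (s⁻¹ * t) - μ (α s x) t|) < ε

section aux

variable {Γ : Type*} [Group Γ]

omit [Group Γ] in
lemma norm_lp1 (f : lp (fun _ : Γ => ℝ) 1) : ‖f‖ = ∑' t, |f t| := by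
  have hp : 0 < (1 : ENNReal).toReal := by norm_num
  simpa [Real.norm_eq_abs] using lp.norm_eq_tsum_rpow hp f

lemma shift_mem (s : Γ) (f : lp (fun _ : Γ => ℝ) 1) :
    Memℓp (fun t => f (s⁻¹ * t)) (1 : ENNReal) := by
  have hp : 0 < (1 : ENNReal).toReal := by norm_num
  rw [memℓp_gen_iff hp]
  have hf := (memℓp_gen_iff hp).mp (lp.memℓp f)
  exact ((Equiv.mulLeft s⁻¹).summable_iff).mpr hf

noncomputable def shiftL (s : Γ) (f : lp (fun _ : Γ => ℝ) 1) : lp (fun _ : Γ => ℝ) 1 :=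
  ⟨fun t => f (s⁻¹ * t), shift_mem s f⟩

lemma shiftL_apply (s : Γ) (f : lp (fun _ : Γ => ℝ) 1) (t : Γ) :
    shiftL s f t = f (s⁻¹ * t) := rfl

lemma shiftL_sub (s : Γ) (f g : lp (fun _ : Γ => ℝ) 1) :
    shiftL s (f - g) = shiftL s f - shiftL s g := by
  apply lp.ext
  funext t
  simp [shiftL_apply, lp.coeFn_sub, Pi.sub_apply]

lemma norm_shiftL (s : Γ) (f : lp (fun _ : Γ => ℝ) 1) : ‖shiftL s f‖ = ‖f‖ := by
  rw [norm_lp1, norm_lp1]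
  exact (Equiv.mulLeft s⁻¹).tsum_eq (fun t => |f t|)

lemma isometry_shiftL (s : Γ) : Isometry (shiftL (Γ := Γ) s) :=
  Isometry.of_dist_eq fun f g => by
    rw [dist_eq_norm, dist_eq_norm, ← shiftL_sub, norm_shiftL]

lemma key_eq (s : Γ) (f g : lp (fun _ : Γ => ℝ) 1) :
    ∑' t, |f (s⁻¹ * t) - g t| = ‖shiftL s f - g‖ := by
  rw [norm_lp1]
  exact tsum_congr fun t => by simp [lp.coeFn_sub, Pi.sub_apply, shiftL_apply]

end aux

/-- For any countable group `Γ`, the set of amenable actions on the Cantor set `X`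
is a `Gδ` subset of `S(Γ, X)`. -/
theorem amenability_isGdelta (Γ X : Type*) [Group Γ] [Countable Γ]
    [TopologicalSpace X] [CompactSpace X] [MetrizableSpace X]
    [TotallyDisconnectedSpace X] [PerfectSpace X] [Nonempty X] :
    IsGδ {α : Γ →* (X ≃ₜ X) | IsAmenableAction α} := by
  letI : MetricSpace X := TopologicalSpace.metrizableSpaceMetric X
  set A : ℕ → Finset Γ → Set (Γ →* (X ≃ₜ X)) := fun n S =>
    {α | ∃ μ : C(X, ↥(lp (fun _ : Γ => ℝ) 1)),
      (∀ (x : X) (t : Γ), 0 ≤ μ x t) ∧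
      (∀ x : X, ‖μ x‖ = 1) ∧
      ∀ s ∈ S, ∀ x : X,
        (∑' t : Γ, |μ x (s⁻¹ * t) - μ (α s x) t|) < 1 / ((n : ℝ) + 1)} with hA
  have hset : {α : Γ →* (X ≃ₜ X) | IsAmenableAction α} = ⋂ (n : ℕ) (S : Finset Γ), A n S := by
    ext α
    simp only [Set.mem_setOf_eq, Set.mem_iInter, hA]
    constructor
    · intro h n S
      exact h (1 / ((n : ℝ) + 1)) (by positivity) S
    · intro h ε hε S
      obtain ⟨n, hn⟩ := exists_nat_one_div_lt hε
      obtain ⟨μ, h1, h2, h3⟩ := h n S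
      exact ⟨μ, h1, h2, fun s hs x => (h3 s hs x).trans hn⟩
  rw [hset]
  refine IsGδ.iInter fun n => IsGδ.iInter fun S => IsOpen.isGδ ?_
  rw [isOpen_iff_forall_mem_open]
  intro α hα
  obtain ⟨μ, hpos, hnorm, hlt⟩ := hα
  set ε : ℝ := 1 / ((n : ℝ) + 1) with hε
  have hεpos : 0 < ε := by positivity
  -- the pointwise defect function
  set G : Γ → X → ℝ := fun s x => ‖shiftL s (μ x) - μ (α s x)‖ with hG
  have hGcont : ∀ s : Γ, Continuous (G s) := by
    intro s
    exact (((isometry_shiftL s).continuous.comp μ.continuous).sub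
      (μ.continuous.comp (α s).continuous)).norm
  have main : ∀ s ∈ S, ∃ δ : ℝ, 0 < δ ∧
      ∀ β : Γ →* (X ≃ₜ X), (∀ x, dist (β s x) (α s x) < δ) →
        ∀ x : X, (∑' t : Γ, |μ x (s⁻¹ * t) - μ (β s x) t|) < ε := by
    intro s hs
    obtain ⟨x₀, -, hx₀⟩ := isCompact_univ.exists_isMaxOn Set.univ_nonempty
      (hGcont s).continuousOn
    replace hx₀ : ∀ y : X, G s y ≤ G s x₀ := fun y => hx₀ (Set.mem_univ y)
    have hcs : G s x₀ < ε := by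
      have := hlt s hs x₀
      rwa [key_eq] at this
    have hεc : 0 < ε - G s x₀ := by linarith
    obtain ⟨δ, hδpos, hδ⟩ := Metric.uniformContinuous_iff.mp
      (CompactSpace.uniformContinuous_of_continuous μ.continuous) _ hεc
    refine ⟨δ, hδpos, fun β hβ x => ?_⟩
    rw [key_eq]
    have h1 : ‖shiftL s (μ x) - μ (β s x)‖ ≤
        ‖shiftL s (μ x) - μ (α s x)‖ + ‖μ (α s x) - μ (β s x)‖ := by
      have := dist_triangle (shiftL s (μ x)) (μ (α s x)) (μ (β s x))
      simpa [dist_eq_norm] using this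
    have h2 : ‖μ (α s x) - μ (β s x)‖ < ε - G s x₀ := by
      rw [← dist_eq_norm]
      exact hδ (by rw [dist_comm]; exact hβ x)
    have h3 : ‖shiftL s (μ x) - μ (α s x)‖ ≤ G s x₀ := hx₀ x
    linarith
  choose δ hδpos hδ using main
  classical
  set δ' : Γ → ℝ := fun s => if h : s ∈ S then δ s h else 1 with hδ'
  have hδ'eq : ∀ s (hs : s ∈ S), δ' s = δ s hs := fun s hs => by
    simp only [hδ']
    exact dif_pos hs
  have hδ'pos : ∀ s ∈ S, 0 < δ' s := fun s hs => (hδ'eq s hs) ▸ hδpos s hs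
  refine ⟨⋂ s ∈ S,
      (fun β : Γ →* (X ≃ₜ X) => ((β s : X ≃ₜ X) : C(X, X))) ⁻¹'
        (Metric.ball ((α s : X ≃ₜ X) : C(X, X)) (δ' s)), ?_, ?_, ?_⟩
  · intro β hβ
    simp only [Set.mem_iInter, Set.mem_preimage, Metric.mem_ball] at hβ
    refine ⟨μ, hpos, hnorm, fun s hs x => ?_⟩
    refine hδ s hs β (fun y => ?_) x
    calc dist (β s y) (α s y)
        ≤ dist ((β s : X ≃ₜ X) : C(X, X)) ((α s : X ≃ₜ X) : C(X, X)) :=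
          ContinuousMap.dist_apply_le_dist
            (f := ((β s : X ≃ₜ X) : C(X, X))) (g := ((α s : X ≃ₜ X) : C(X, X))) y
      _ < δ' s := hβ s hs
      _ = δ s hs := hδ'eq s hs
  · refine isOpen_biInter_finset fun s hs => ?_
    have hcont : Continuous fun β : Γ →* (X ≃ₜ X) => ((β s : X ≃ₜ X) : C(X, X)) := by
      have h1 : Continuous fun β : Γ →* (X ≃ₜ X) => (β : Γ → X ≃ₜ X) :=
        continuous_induced_dom
      have h2 : Continuous fun β : Γ →* (X ≃ₜ X) => (β s : X ≃ₜ X) :=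
        (continuous_apply s).comp h1
      have h3 : Continuous fun φ : X ≃ₜ X => ((φ : C(X, X)), (φ.symm : C(X, X))) :=
        continuous_induced_dom
      exact (continuous_fst.comp h3).comp h2
    exact hcont.isOpen_preimage _ Metric.isOpen_ball
  · simp only [Set.mem_iInter, Set.mem_preimage, Metric.mem_ball]
    intro s hs
    exact Metric.mem_ball_self (hδ'pos s hs)
end

section
/- Let Γ be a countable group and let α ∈ S(Γ,X) be a given action of Γ on the Cantor set X. Then the set of actions β ∈ S(Γ,X) that are extensions of α is dense in S(Γ,X). -/
open TopologicalSpace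

/-!
Given `β`, take homeomorphisms `h : X ≃ₜ X × X` whose first coordinate moves points less and
less. The actions `h⁻¹ ∘ (β × α) ∘ h` are extensions of `α` through `x ↦ (h x).2`, and they
converge to `β` uniformly.

Such `h` come from Brouwer's characterization of the Cantor set in a relative form: a partition
of `X` into `2 ^ m` nonempty clopen sets labelled by the words of length `m` extends to a
homeomorphism `X ≃ₜ (ℕ → Bool)` whose first `m` coordinates are the labels. Applied to a fine
partition `P` of `X` and to the partition `P × X` of `X × X`, it yields `h`. The relative
theorem is proved by bisecting every piece, again and again, so that each set of a countable
clopen basis eventually becomes a union of pieces; perfectness is what makes bisection possible.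
-/

open Set Filter Topology Function

section Split

variable {X : Type*} [TopologicalSpace X]

instance {Y : Type*} [TopologicalSpace Y] [PerfectSpace X] : PerfectSpace (X × Y) := by
  refine perfectSpace_iff_forall_not_isolated.2 fun ⟨x, y⟩ => ?_
  have hle : 𝓝[{x}ᶜ ×ˢ univ] (x, y) ≤ 𝓝[≠] (x, y) :=
    nhdsWithin_mono _ fun p hp hpx => hp.1 (congrArg Prod.fst hpx)
  rw [nhdsWithin_prod_eq, nhdsWithin_univ] at hle
  exact Filter.NeBot.mono inferInstance hle

theorem IsClopen.exists_isClopen_split [TotallySeparatedSpace X] [PerfectSpace X] {F : Set X}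
    (hF : IsClopen F) (hne : F.Nonempty) :
    ∃ T, IsClopen T ∧ T ⊆ F ∧ T.Nonempty ∧ (F \ T).Nonempty := by
  obtain ⟨x, hx⟩ := hne
  obtain ⟨y, ⟨hyF, -⟩, hyx⟩ :=
    preperfect_iff_nhds.1 PerfectSpace.univ_preperfect x (mem_univ x) F (hF.isOpen.mem_nhds hx)
  obtain ⟨V, hV, hxV, hyV⟩ := exists_isClopen_of_totally_separated hyx.symm
  exact ⟨F ∩ V, hF.inter hV, inter_subset_left, ⟨x, hx, hxV⟩, ⟨y, hyF, fun h => hyV h.2⟩⟩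

theorem IsClopen.exists_isClopen_split_adapted [TotallySeparatedSpace X] [PerfectSpace X]
    {F C : Set X} (hF : IsClopen F) (hne : F.Nonempty) (hC : IsClopen C) :
    ∃ T, IsClopen T ∧ T ⊆ F ∧ T.Nonempty ∧ (F \ T).Nonempty ∧
      ∀ x ∈ F, ∀ y ∈ F, (x ∈ T ↔ y ∈ T) → (x ∈ C ↔ y ∈ C) := by
  by_cases hsplit : (F ∩ C).Nonempty ∧ (F \ C).Nonempty
  · refine ⟨F ∩ C, hF.inter hC, inter_subset_left, hsplit.1, ?_, fun x hx y hy => by simp [hx, hy]⟩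
    rw [sdiff_self_inter]
    exact hsplit.2
  · obtain ⟨T, hT, hTF, hTne, hFTne⟩ := hF.exists_isClopen_split hne
    refine ⟨T, hT, hTF, hTne, hFTne, fun x hx y hy _ => ?_⟩
    rw [not_and_or, not_nonempty_iff_eq_empty, not_nonempty_iff_eq_empty] at hsplit
    rcases hsplit with h | h
    · exact iff_of_false (fun hxC => h.subset ⟨hx, hxC⟩) (fun hyC => h.subset ⟨hy, hyC⟩)
    · exact iff_of_true (by_contra fun hxC => h.subset ⟨hx, hxC⟩)
        (by_contra fun hyC => h.subset ⟨hy, hyC⟩)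

end Split

/-- A partition of `X` into `2 ^ m` nonempty clopen sets, labelled by the words of length `m`. -/
structure Coding (X : Type*) [TopologicalSpace X] (m : ℕ) where
  toFun : X → Fin m → Bool
  continuous : Continuous toFun
  surjective : Surjective toFun

instance {X : Type*} [TopologicalSpace X] {m : ℕ} : CoeFun (Coding X m) fun _ => X → Fin m → Bool :=
  ⟨Coding.toFun⟩

section Refinement
variable {X : Type*} [TopologicalSpace X] [TotallySeparatedSpace X] [PerfectSpace X]

theorem exists_refining_bit {m : ℕ} {c : X → Fin m → Bool} (hc : Continuous c)
    (hs : Surjective c) {C : Set X} (hC : IsClopen C) :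
    ∃ b : X → Bool, Continuous b ∧
      Surjective (fun x => Fin.snoc (c x) (b x) : X → Fin (m + 1) → Bool) ∧
      ∀ x y, c x = c y → b x = b y → (x ∈ C ↔ y ∈ C) := by
  have hF (w : Fin m → Bool) : IsClopen (c ⁻¹' {w}) := (isClopen_discrete {w}).preimage hc
  choose T hT hTF hTne hFTne hTC using fun w =>
    (hF w).exists_isClopen_split_adapted (hs.nonempty_preimage.2 (singleton_nonempty w)) hC
  have hmem (x : X) : x ∈ ⋃ w, T w ↔ x ∈ T (c x) := by
    refine ⟨fun hx => ?_, fun hx => mem_iUnion_of_mem _ hx⟩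
    obtain ⟨w, hw⟩ := mem_iUnion.1 hx
    rwa [show c x = w from hTF w hw]
  refine ⟨(⋃ w, T w).boolIndicator,
    (continuous_boolIndicator_iff_isClopen _).2 (isClopen_iUnion_of_finite hT), fun u => ?_, ?_⟩
  · obtain ⟨x, hxF, hxT⟩ : ∃ x, c x = Fin.init u ∧ (x ∈ T (c x) ↔ u (Fin.last m)) := by
      cases u (Fin.last m)
      · obtain ⟨x, hxF, hxT⟩ := hFTne (Fin.init u)
        exact ⟨x, hxF, by simpa [show c x = Fin.init u from hxF] using hxT⟩
      · obtain ⟨x, hxT⟩ := hTne (Fin.init u)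
        exact ⟨x, hTF _ hxT, by simpa [show c x = Fin.init u from hTF _ hxT] using hxT⟩
    have hb : (⋃ w, T w).boolIndicator x = u (Fin.last m) :=
      Bool.eq_iff_iff.2 (((mem_iff_boolIndicator _ _).symm.trans (hmem x)).trans hxT)
    exact ⟨x, by simp only [hxF, hb, Fin.snoc_init_self]⟩
  · intro x y hxy hb
    refine hTC (c x) x rfl y hxy.symm ?_
    rw [← hmem, hxy, ← hmem, mem_iff_boolIndicator, mem_iff_boolIndicator, hb]

namespace Coding

variable {n : ℕ}

noncomputable def refiningBit (c : Coding X n) (C : Clopens X) : X → Bool :=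
  (exists_refining_bit c.continuous c.surjective C.isClopen).choose

noncomputable def refine (c : Coding X n) (C : Clopens X) : Coding X (n + 1) :=
  have h := (exists_refining_bit c.continuous c.surjective C.isClopen).choose_spec
  ⟨fun x => Fin.snoc (c x) (c.refiningBit C x), c.continuous.finSnoc h.1, h.2.1⟩

theorem refine_apply (c : Coding X n) (C : Clopens X) (x : X) :
    c.refine C x = Fin.snoc (c x) (c.refiningBit C x) :=
  rfl

theorem mem_iff_of_refine_eq (c : Coding X n) (C : Clopens X) {x y : X}
    (h : c.refine C x = c.refine C y) : x ∈ C ↔ y ∈ C := by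
  rw [refine_apply, refine_apply] at h
  obtain ⟨hc, hb⟩ := Fin.snoc_injective2 h
  exact (exists_refining_bit c.continuous c.surjective C.isClopen).choose_spec.2.2 x y hc hb

noncomputable def seq (c : Coding X n) (C : ℕ → Clopens X) : (k : ℕ) → Coding X (n + k)
  | 0 => c
  | k + 1 => (c.seq C k).refine (C k)

theorem seq_apply_of_le (c : Coding X n) (C : ℕ → Clopens X) (x : X) {k l : ℕ} (hkl : k ≤ l)
    {i : ℕ} (hi : i < n + k) : c.seq C l x ⟨i, by omega⟩ = c.seq C k x ⟨i, hi⟩ := by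
  induction l, hkl using Nat.le_induction with
  | base => rfl
  | succ l hkl ih =>
    exact (Fin.snoc_castSucc (α := fun _ => Bool) _ _ ⟨i, (by omega : i < n + l)⟩).trans ih

noncomputable def limit (c : Coding X n) (C : ℕ → Clopens X) (x : X) (i : ℕ) : Bool :=
  c.seq C (i + 1) x ⟨i, by omega⟩

theorem seq_apply (c : Coding X n) (C : ℕ → Clopens X) (k : ℕ) (x : X) (i : Fin (n + k)) :
    c.seq C k x i = c.limit C x i := by
  rcases le_total k (i + 1) with h | h
  · exact (c.seq_apply_of_le C x h i.2).symm
  · exact c.seq_apply_of_le C x h (by omega)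

theorem limit_apply (c : Coding X n) (C : ℕ → Clopens X) (x : X) (i : Fin n) :
    c.limit C x i = c x i :=
  (c.seq_apply C 0 x i).symm

theorem continuous_limit (c : Coding X n) (C : ℕ → Clopens X) : Continuous (c.limit C) :=
  continuous_pi fun i => (continuous_apply _).comp (c.seq C (i + 1)).continuous

theorem exists_limit_eq (c : Coding X n) (C : ℕ → Clopens X) (w : ℕ → Bool) (m : ℕ) :
    ∃ x, ∀ i < m, c.limit C x i = w i := by
  obtain ⟨x, hx⟩ := (c.seq C m).surjective fun i => w i
  exact ⟨x, fun i hi => by rw [← c.seq_apply C m x ⟨i, by omega⟩, hx]⟩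

theorem mem_iff_of_limit_eq (c : Coding X n) (C : ℕ → Clopens X) {x y : X} {k : ℕ}
    (h : ∀ i < n + k + 1, c.limit C x i = c.limit C y i) : x ∈ C k ↔ y ∈ C k :=
  (c.seq C k).mem_iff_of_refine_eq (C k) <| funext fun i =>
    (c.seq_apply C (k + 1) x i).trans ((h i i.2).trans (c.seq_apply C (k + 1) y i).symm)

theorem denseRange_limit (c : Coding X n) (C : ℕ → Clopens X) : DenseRange (c.limit C) := by
  refine (PiNat.isTopologicalBasis_cylinders _).dense_iff.2 ?_
  rintro _ ⟨w, m, rfl⟩ -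
  obtain ⟨x, hx⟩ := c.exists_limit_eq C w m
  exact ⟨_, hx, mem_range_self x⟩

end Coding

end Refinement

section Brouwer

variable {X : Type*} [TopologicalSpace X] [CompactSpace X] [T2Space X] [TotallyDisconnectedSpace X]

theorem exists_seq_clopens_separating [SecondCountableTopology X] [Nonempty X] :
    ∃ C : ℕ → Clopens X, ∀ x y, (∀ k, x ∈ C k ↔ y ∈ C k) → x = y := by
  obtain ⟨B, hBcl, hBc, hB⟩ := isTopologicalBasis_isClopen.exists_countable (α := X)
  obtain ⟨f, rfl⟩ := hBc.exists_eq_range (.of_sUnion_eq_univ hB.sUnion_eq)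
  refine ⟨fun k => ⟨f k, hBcl (mem_range_self k)⟩, fun x y h => by_contra fun hxy => ?_⟩
  obtain ⟨_, ⟨k, rfl⟩, hxk, hk⟩ :=
    hB.exists_subset_of_mem_open (show x ∈ {y}ᶜ from hxy) isOpen_compl_singleton
  exact hk ((h k).1 hxk) rfl

variable [PerfectSpace X] {n : ℕ}

namespace Coding

theorem exists_of_mem_nhdsSet_diagonal [Nonempty X] {S : Set (X × X)}
    (hS : S ∈ 𝓝ˢ (diagonal X)) : ∃ (m : ℕ) (c : Coding X m), ∀ x y, c x = c y → (x, y) ∈ S := by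
  obtain ⟨r, D, -, hDS, hcover, -⟩ :=
    (ContinuousMap.id X).exists_disjoint_nonempty_clopen_cover_of_mem_nhds_diagonal hS
  let c₀ : Coding X 0 := ⟨fun _ => Fin.elim0, continuous_const,
    fun _ => ⟨Classical.arbitrary X, Subsingleton.elim _ _⟩⟩
  let C (k : ℕ) : Clopens X := if h : k < r then D ⟨k, h⟩ else ⊥
  refine ⟨0 + r, c₀.seq C r, fun x y hxy => ?_⟩
  obtain ⟨i, hxi⟩ := mem_iUnion.1 (hcover (mem_univ x))
  have hC : x ∈ C i ↔ y ∈ C i := c₀.mem_iff_of_limit_eq C fun j hj => by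
    rw [← c₀.seq_apply C r x ⟨j, by omega⟩, hxy, c₀.seq_apply]
  simp only [C, i.2, dif_pos] at hC
  exact hDS i x hxi y (hC.1 hxi)

theorem exists_homeomorph_extending [SecondCountableTopology X] (c : Coding X n) :
    ∃ D : X ≃ₜ (ℕ → Bool), ∀ x (i : Fin n), D x i = c x i := by
  have : Nonempty X := c.surjective.nonempty
  obtain ⟨C, hC⟩ := exists_seq_clopens_separating (X := X)
  have hinj : Injective (c.limit C) := fun x y h =>
    hC x y fun k => c.mem_iff_of_limit_eq C fun i _ => congrFun h i
  have hsurj : Surjective (c.limit C) := by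
    rw [← range_eq_univ, ← (isCompact_range (c.continuous_limit C)).isClosed.closure_eq]
    exact (c.denseRange_limit C).closure_range
  exact ⟨(c.continuous_limit C).homeoOfEquivCompactToT2 (f := .ofBijective _ ⟨hinj, hsurj⟩),
    c.limit_apply C⟩

end Coding

end Brouwer

theorem exists_homeomorph_prod_fst_mem {X : Type*} [TopologicalSpace X] [CompactSpace X]
    [T2Space X] [TotallyDisconnectedSpace X] [PerfectSpace X] [SecondCountableTopology X]
    [Nonempty X] {S : Set (X × X)} (hS : S ∈ 𝓝ˢ (diagonal X)) :
    ∃ h : X ≃ₜ X × X, ∀ x, ((h x).1, x) ∈ S := by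
  obtain ⟨m, c, hc⟩ := Coding.exists_of_mem_nhdsSet_diagonal hS
  let c' : Coding (X × X) m :=
    ⟨c ∘ Prod.fst, c.continuous.comp continuous_fst, c.surjective.comp Prod.fst_surjective⟩
  obtain ⟨D, hD⟩ := c.exists_homeomorph_extending
  obtain ⟨E, hE⟩ := c'.exists_homeomorph_extending
  refine ⟨D.trans E.symm, fun x => hc _ _ (funext fun i => ?_)⟩
  calc c (E.symm (D x)).1 i = E (E.symm (D x)) i := (hE _ i).symm
    _ = c x i := by rw [E.apply_symm_apply, hD]

section Action

variable {Γ X : Type*} [Group Γ] [TopologicalSpace X]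

theorem homeoGroup_inv_eq_symm (f : X ≃ₜ X) : f⁻¹ = f.symm :=
  rfl

def prodConjAction (h : X ≃ₜ X × X) (β α : Γ →* (X ≃ₜ X)) : Γ →* (X ≃ₜ X) where
  toFun s := h.trans (((β s).prodCongr (α s)).trans h.symm)
  map_one' := by ext x; simp [Prod.map]
  map_mul' s t := by ext x; simp [Prod.map]

theorem prodConjAction_apply (h : X ≃ₜ X × X) (β α : Γ →* (X ≃ₜ X)) (s : Γ) (x : X) :
    prodConjAction h β α s x = h.symm (β s (h x).1, α s (h x).2) :=
  rfl

theorem tendsto_nhds_homeomorph_iff {ι : Type*} {l : Filter ι} {f : ι → X ≃ₜ X} {φ : X ≃ₜ X} :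
    Tendsto f l (𝓝 φ) ↔ Tendsto (fun i => (f i : C(X, X))) l (𝓝 φ) ∧
      Tendsto (fun i => ((f i).symm : C(X, X))) l (𝓝 φ.symm) := by
  rw [(⟨rfl⟩ : IsInducing fun φ : X ≃ₜ X => ((φ : C(X, X)), (φ.symm : C(X, X)))).tendsto_nhds_iff,
    nhds_prod_eq, tendsto_prod_iff']
  rfl

theorem tendsto_nhds_action_iff {ι : Type*} {l : Filter ι} {f : ι → Γ →* (X ≃ₜ X)}
    {β : Γ →* (X ≃ₜ X)} :
    Tendsto f l (𝓝 β) ↔ ∀ s, Tendsto (fun i => (f i s : C(X, X))) l (𝓝 (β s)) := by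
  rw [(⟨rfl⟩ : IsInducing fun α : Γ →* (X ≃ₜ X) => (α : Γ → X ≃ₜ X)).tendsto_nhds_iff,
    tendsto_pi_nhds]
  simp only [comp_apply, tendsto_nhds_homeomorph_iff]
  refine ⟨fun h s => (h s).1, fun h s => ⟨h s, ?_⟩⟩
  simpa only [map_inv, homeoGroup_inv_eq_symm] using h s⁻¹

end Action

theorem tendsto_prodConjAction {Γ X ι : Type*} [Group Γ] [MetricSpace X] [CompactSpace X]
    {l : Filter ι} {h : ι → X ≃ₜ X × X} (hh : TendstoUniformly (fun i x => (h i x).1) id l)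
    (β α : Γ →* (X ≃ₜ X)) : Tendsto (fun i => prodConjAction (h i) β α) l (𝓝 β) := by
  refine tendsto_nhds_action_iff.2 fun s => ?_
  rw [ContinuousMap.tendsto_iff_tendstoUniformly, Metric.tendstoUniformly_iff]
  intro ε hε
  obtain ⟨δ, hδ, hβ⟩ := Metric.uniformContinuous_iff.1
    (CompactSpace.uniformContinuous_of_continuous (β s).continuous) (ε / 2) (half_pos hε)
  filter_upwards [Metric.tendstoUniformly_iff.1 hh _ (lt_min hδ (half_pos hε))] with i hi x
  have hx : dist (β s x) (β s (h i x).1) < ε / 2 := hβ ((hi x).trans_le (min_le_left _ _))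
  have hy : dist (prodConjAction (h i) β α s x) (β s (h i x).1) < ε / 2 := by
    simpa [prodConjAction_apply] using
      (hi ((h i).symm (β s (h i x).1, α s (h i x).2))).trans_le (min_le_right _ _)
  simpa using (dist_triangle_right _ _ _).trans_lt (add_lt_add hx hy)

theorem extensions_dense_general (Γ X : Type*) [Group Γ]
    [TopologicalSpace X] [CompactSpace X] [MetrizableSpace X]
    [TotallyDisconnectedSpace X] [PerfectSpace X] [Nonempty X]
    (α : Γ →* (X ≃ₜ X)) :
    Dense {β : Γ →* (X ≃ₜ X) | ∃ π : X → X, Continuous π ∧ Function.Surjective π ∧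
      ∀ (s : Γ) (x : X), π (β s x) = α s (π x)} := by
  let := metrizableSpaceMetric X
  have hS (n : ℕ) : {p : X × X | dist p.1 p.2 < 1 / (n + 1)} ∈ 𝓝ˢ (diagonal X) :=
    (isOpen_lt continuous_dist continuous_const).mem_nhdsSet.2 fun p (hp : p.1 = p.2) => by
      show dist p.1 p.2 < _; rw [hp, dist_self]; positivity
  choose h hh using fun n => exists_homeomorph_prod_fst_mem (hS n)
  have hconv : TendstoUniformly (fun n x => (h n x).1) id atTop := by
    refine Metric.tendstoUniformly_iff.2 fun ε hε => ?_
    obtain ⟨N, hN⟩ := exists_nat_one_div_lt hε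
    filter_upwards [eventually_ge_atTop N] with n hn x
    rw [dist_comm]
    exact (hh n x).trans_le (le_trans (Nat.one_div_le_one_div hn) hN.le)
  intro β
  refine mem_closure_of_tendsto (tendsto_prodConjAction hconv β α) (.of_forall fun n => ?_)
  refine ⟨fun x => (h n x).2, by fun_prop,
    fun y => ⟨(h n).symm (Classical.arbitrary X, y), by simp⟩,
    fun s x => by simp [prodConjAction_apply]⟩

/-- For a countable group `Γ` and a Cantor system `α ∈ S(Γ, X)`, the set of
extensions of `α` (actions `β` admitting a `Γ`-equivariant continuous surjection
`π : X → X` onto `α`) is dense in `S(Γ, X)`. -/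
theorem extensions_dense (Γ X : Type*) [Group Γ] [Countable Γ]
    [TopologicalSpace X] [CompactSpace X] [MetrizableSpace X]
    [TotallyDisconnectedSpace X] [PerfectSpace X] [Nonempty X]
    (α : Γ →* (X ≃ₜ X)) :
    Dense {β : Γ →* (X ≃ₜ X) | ∃ π : X → X, Continuous π ∧ Function.Surjective π ∧
      ∀ (s : Γ) (x : X), π (β s x) = α s (π x)} :=
  extensions_dense_general Γ X α
end

section
/- Let Γ be a countable discrete group and let s ∈ Γ with s ≠ e. Then the continuous extension to the Stone–Čech compactification βΓ of the left translation map t ↦ st on Γ has no fixed points; that is, the left translation action of Γ on βΓ is free. -/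
/-!
Left multiplication by `s ≠ 1` moves every point of `Γ`, and its orbits are the right cosets of
`⟨s⟩`, each a cycle of length `orderOf s ≠ 1` (or a copy of `ℤ`). Colouring each cycle with
three colours gives `c : Γ → Fin 3` with `c (s * t) ≠ c t`. If `F` and `T` extend `c` and the
translation to `βΓ`, the continuous maps `F ∘ T` and `F` into the discrete space `Fin 3` disagree
on the dense subset `Γ`, hence everywhere, so `T` has no fixed point.
-/

theorem DenseRange.apply_ne_of_forall_comp_ne {α X Y : Type*} [TopologicalSpace X]
    [TopologicalSpace Y] [DiscreteTopology Y] {ι : α → X} (hι : DenseRange ι) {f g : X → Y}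
    (hf : Continuous f) (hg : Continuous g) (h : ∀ a, f (ι a) ≠ g (ι a)) (x : X) :
    f x ≠ g x := by
  intro hx
  have hopen : IsOpen {y | f y = g y} :=
    (isOpen_discrete {p : Y × Y | p.1 = p.2}).preimage (hf.prodMk hg)
  obtain ⟨a, ha⟩ := hι.exists_mem_open hopen ⟨x, hx⟩
  exact h a ha

def residueColor (r : ℤ) : Fin 3 :=
  if r = 0 then 2 else if r % 2 = 0 then 0 else 1

theorem residueColor_add_one_ne (r : ℤ) : residueColor (r + 1) ≠ residueColor r := by
  unfold residueColor
  split_ifs <;> first | decide | omega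

theorem residueColor_zero_ne {r : ℤ} (hr : r ≠ 0) : residueColor 0 ≠ residueColor r := by
  unfold residueColor
  split_ifs <;> first | decide | omega

theorem Int.exists_coloring_ne_of_modEq_add_one {n : ℕ} (hn : n ≠ 1) :
    ∃ c : ℤ → Fin 3, ∀ a b, a ≡ b + 1 [ZMOD n] → c a ≠ c b := by
  refine ⟨fun k => residueColor (k % n), fun a b hab => ?_⟩
  change residueColor (a % n) ≠ residueColor (b % n)
  rw [show a % n = (b + 1) % n from hab]
  rcases Nat.eq_zero_or_pos n with rfl | hpos
  · simp only [Nat.cast_zero, Int.emod_zero]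
    exact residueColor_add_one_ne b
  · have hb0 : 0 ≤ b % n := Int.emod_nonneg _ (by omega)
    have hbn : b % n < n := Int.emod_lt_of_pos _ (by omega)
    rw [Int.add_emod, Int.emod_eq_of_lt (by omega : (0:ℤ) ≤ 1) (by omega : (1:ℤ) < n)]
    rcases eq_or_lt_of_le (show b % n + 1 ≤ n by omega) with hwrap | hlt
    · rw [hwrap, Int.emod_self]
      exact residueColor_zero_ne (by omega)
    · rw [Int.emod_eq_of_lt (by omega) hlt]
      exact residueColor_add_one_ne _

theorem exists_zpow_index_mul_left {Γ : Type*} [Group Γ] (s : Γ) :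
    ∃ K : Γ → ℤ, ∀ t, K (s * t) ≡ K t + 1 [ZMOD orderOf s] := by
  -- `rep` picks a point of each right coset `⟨s⟩ t`; then `K t` is defined by `t = s ^ K t * rep t`.
  let rep : Γ → Γ := fun t => (Quotient.mk (QuotientGroup.rightRel (Subgroup.zpowers s)) t).out
  have hrep_mem : ∀ t, t * (rep t)⁻¹ ∈ Subgroup.zpowers s := fun t =>
    QuotientGroup.rightRel_apply.mp (Quotient.exact (Quotient.out_eq _))
  have hrep_mul : ∀ t, rep (s * t) = rep t := fun t => by
    have : t * (s * t)⁻¹ ∈ Subgroup.zpowers s := by simp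
    simp only [rep, Quotient.sound (QuotientGroup.rightRel_apply.mpr this)]
  choose K hK using fun t => Subgroup.mem_zpowers_iff.mp (hrep_mem t)
  refine ⟨K, fun t => zpow_eq_zpow_iff_modEq.mp ?_⟩
  calc s ^ K (s * t) = s * (t * (rep t)⁻¹) := by rw [hK, hrep_mul, mul_assoc]
    _ = s ^ (K t + 1) := by rw [← hK, zpow_add_one, (Commute.self_zpow s (K t)).eq]

theorem exists_coloring_mul_left_ne {Γ : Type*} [Group Γ] {s : Γ} (hs : s ≠ 1) :
    ∃ c : Γ → Fin 3, ∀ t, c (s * t) ≠ c t := by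
  obtain ⟨K, hK⟩ := exists_zpow_index_mul_left s
  obtain ⟨f, hf⟩ := Int.exists_coloring_ne_of_modEq_add_one (n := orderOf s)
    (by rwa [Ne, orderOf_eq_one_iff])
  exact ⟨f ∘ K, fun t => hf _ _ (hK t)⟩

theorem stoneCech_left_translation_free_general (Γ : Type*) [Group Γ]
    [TopologicalSpace Γ] [DiscreteTopology Γ] (s : Γ) (hs : s ≠ 1) (x : StoneCech Γ) :
    stoneCechExtend (g := fun t : Γ => stoneCechUnit (s * t))
      continuous_of_discreteTopology x ≠ x := by
  obtain ⟨c, hc⟩ := exists_coloring_mul_left_ne hs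
  have hT := continuous_stoneCechExtend (g := fun t : Γ => stoneCechUnit (s * t))
    continuous_of_discreteTopology
  have hF := continuous_stoneCechExtend (g := c) continuous_of_discreteTopology
  have hcolor := denseRange_stoneCechUnit.apply_ne_of_forall_comp_ne (hF.comp hT) hF
    (fun t => by simpa only [Function.comp_apply, stoneCechExtend_stoneCechUnit] using hc t)
  exact fun hfix => hcolor x (congrArg _ hfix)

/-- For a countable discrete group `Γ` and `s ≠ e` in `Γ`, the continuous extension
to the Stone–Čech compactification `βΓ` of the left translation `t ↦ s t` has no
fixed points; that is, the left translation action of `Γ` on `βΓ` is free. -/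
theorem stoneCech_left_translation_free (Γ : Type*) [Group Γ] [Countable Γ]
    [TopologicalSpace Γ] [DiscreteTopology Γ] (s : Γ) (hs : s ≠ 1) (x : StoneCech Γ) :
    stoneCechExtend (g := fun t : Γ => stoneCechUnit (s * t))
      continuous_of_discreteTopology x ≠ x :=
  stoneCech_left_translation_free_general Γ s hs x
end

section
/- Every countable group Γ admits a free action on the Cantor set, i.e. there exists a group homomorphism α : Γ → Homeo(X), where X is the Cantor set, such that for every s ∈ Γ∖{e} the homeomorphism α_s has no fixed point. -/
/-!
For `s ≠ 1`, left multiplication by `s` acts on each right coset of `⟨s⟩` as `+1` on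
`ZMod (orderOf s)`, so it admits a proper `3`-colouring `c_s : Γ → Fin 3`, i.e.
`c_s (s * x) ≠ c_s x`. Families `(c_s)_{s ≠ 1}` of such colourings form a closed, hence compact,
subset of a countable product of finite sets, invariant under right translation, and a family
fixed by the right translation by `g ≠ 1` would satisfy `c_g g = c_g 1`. So `Γ` acts freely on
that space, and on its product with `X`, which is moreover perfect. By Brouwer's theorem both
this product and `X` are homeomorphic to `ℕ → Bool`, which transports the action to `X`.

For Brouwer's theorem choose clopen sets `C₀, C₁, …` that separate points and such that each
`C k` cuts every cell of the partition generated by `C₀, …, C (k-1)` into two nonempty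
pieces: then `x ↦ (x ∈ C k)ₖ` is a continuous bijection from `X` onto `ℕ → Bool`.
-/

open TopologicalSpace

namespace ClopenSeq

variable {X : Type*}

noncomputable def code (C : ℕ → Set X) (x : X) (i : ℕ) : Bool := (C i).boolIndicator x

def cell (C : ℕ → Set X) (k : ℕ) (x : X) : Set X := {y | ∀ i < k, y ∈ C i ↔ x ∈ C i}

def IsIndependent (C : ℕ → Set X) : Prop :=
  ∀ k x, (cell C k x ∩ C k).Nonempty ∧ (cell C k x \ C k).Nonempty

open scoped Classical in
def cut (U : Set X) (S : Set X → Set X) (a : Set X) : Set X :=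
  if (a ∩ U).Nonempty ∧ (a \ U).Nonempty then U else S a

/-- Each cell `a` of level `k` is cut along `U k` if this splits it, and along `S a` otherwise. -/
noncomputable def cutSeq (U : ℕ → Set X) (S : Set X → Set X) (k : ℕ) : Set X :=
  {x | x ∈ cut (U k) S {y | ∀ i (_ : i < k), y ∈ cutSeq U S i ↔ x ∈ cutSeq U S i}}
termination_by k

lemma cutSeq_eq (U : ℕ → Set X) (S : Set X → Set X) (k : ℕ) :
    cutSeq U S k = {x | x ∈ cut (U k) S (cell (cutSeq U S) k x)} := by
  rw [cutSeq]; rfl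

variable {C : ℕ → Set X} {U : ℕ → Set X} {S : Set X → Set X} {k : ℕ} {x y : X}

lemma code_eq_iff {ω : ℕ → Bool} : code C x = ω ↔ ∀ i, x ∈ C i ↔ ω i := by
  refine funext_iff.trans (forall_congr' fun i => ?_)
  rw [Set.mem_iff_boolIndicator]
  exact Bool.eq_iff_iff

lemma mem_cell_self : x ∈ cell C k x := fun _ _ => Iff.rfl

lemma cell_eq_of_mem (hy : y ∈ cell C k x) : cell C k y = cell C k x := by
  ext z
  exact forall₂_congr fun i hi => by rw [hy i hi]

lemma mem_cutSeq_iff (hy : y ∈ cell (cutSeq U S) k x) :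
    y ∈ cutSeq U S k ↔ y ∈ cut (U k) S (cell (cutSeq U S) k x) := by
  rw [cutSeq_eq, Set.mem_ofPred_eq, cell_eq_of_mem hy]

lemma cut_split {a : Set X} (hS : (a ∩ S a).Nonempty ∧ (a \ S a).Nonempty) :
    (a ∩ cut (U k) S a).Nonempty ∧ (a \ cut (U k) S a).Nonempty := by
  unfold cut
  split_ifs with h
  exacts [h, hS]

lemma code_cutSeq_injective (hU : ∀ x y, x ≠ y → ∃ n, x ∈ U n ∧ y ∉ U n) :
    Function.Injective (code (cutSeq U S)) := by
  intro x y hxy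
  by_contra hne
  obtain ⟨n, hxU, hyU⟩ := hU x y hne
  have hmem : ∀ i, y ∈ cutSeq U S i ↔ x ∈ cutSeq U S i := fun i =>
    (code_eq_iff.1 hxy.symm i).trans (code_eq_iff.1 rfl i).symm
  have hy : y ∈ cell (cutSeq U S) n x := fun i _ => hmem i
  have hcut : cut (U n) S (cell (cutSeq U S) n x) = U n :=
    if_pos ⟨⟨x, mem_cell_self, hxU⟩, ⟨y, hy, hyU⟩⟩
  have hx : x ∈ cutSeq U S n := (mem_cutSeq_iff mem_cell_self).2 (by rw [hcut]; exact hxU)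
  exact hyU (hcut ▸ (mem_cutSeq_iff hy).1 ((hmem n).2 hx))

variable [TopologicalSpace X]

lemma isClopen_setOf_mem_iff {s : Set X} (hs : IsClopen s) (p : Prop) :
    IsClopen {x | x ∈ s ↔ p} := by
  by_cases hp : p
  · simpa [hp] using hs
  · simp only [hp, iff_false]
    exact hs.compl

lemma isClopen_cell (hC : ∀ i < k, IsClopen (C i)) : IsClopen (cell C k x) := by
  have hcell : cell C k x = ⋂ i ∈ Finset.range k, {y | y ∈ C i ↔ x ∈ C i} := by
    ext; simp [cell]
  rw [hcell]
  exact isClopen_biInter_finset fun i hi =>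
    isClopen_setOf_mem_iff (hC i (Finset.mem_range.1 hi)) _

lemma isClopen_setOf_mem_cell (hC : ∀ i < k, IsClopen (C i)) {V : Set X → Set X}
    (hV : ∀ x, IsClopen (V (cell C k x))) : IsClopen {x | x ∈ V (cell C k x)} := by
  have isOpen_of : ∀ W : Set X → Set X, (∀ x, IsOpen (W (cell C k x))) →
      IsOpen {x | x ∈ W (cell C k x)} := by
    refine fun W hW => isOpen_iff_mem_nhds.2 fun x hx => Filter.mem_of_superset
      (((isClopen_cell hC).isOpen.inter (hW x)).mem_nhds ⟨mem_cell_self, hx⟩) ?_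
    rintro y ⟨hy, hyW⟩
    rwa [Set.mem_ofPred_eq, cell_eq_of_mem hy]
  exact ⟨isOpen_compl_iff.1 (isOpen_of (fun a => (V a)ᶜ) fun x => (hV x).compl.isOpen),
    isOpen_of V fun x => (hV x).isOpen⟩

lemma continuous_code (hC : ∀ i, IsClopen (C i)) : Continuous (code C) :=
  continuous_pi fun i => (continuous_boolIndicator_iff_isClopen _).2 (hC i)

lemma code_surjective [CompactSpace X] [Nonempty X] (hC : ∀ i, IsClopen (C i))
    (hind : IsIndependent C) : Function.Surjective (code C) := by
  intro ω
  let K : ℕ → Set X := fun k => {x | ∀ i < k, x ∈ C i ↔ ω i}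
  have hK_nonempty : ∀ k, (K k).Nonempty := by
    intro k
    induction k with
    | zero => exact ⟨Classical.arbitrary X, fun i hi => absurd hi (Nat.not_lt_zero i)⟩
    | succ k ih =>
      obtain ⟨x, hx⟩ := ih
      obtain ⟨y, hy, hyC⟩ : ∃ y ∈ cell C k x, y ∈ C k ↔ ω k := by
        cases hω : ω k
        · obtain ⟨y, hy, hyC⟩ := (hind k x).2
          exact ⟨y, hy, by simpa using hyC⟩
        · obtain ⟨y, hy, hyC⟩ := (hind k x).1
          exact ⟨y, hy, by simpa using hyC⟩
      refine ⟨y, fun i hi => ?_⟩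
      rcases Nat.lt_succ_iff_lt_or_eq.1 hi with hi | rfl
      exacts [(hy i hi).trans (hx i hi), hyC]
  have hK_closed : ∀ k, IsClosed (K k) := fun k => by
    simp only [K, Set.ofPred_forall]
    exact isClosed_iInter fun i => isClosed_iInter fun _ =>
      (isClopen_setOf_mem_iff (hC i) _).isClosed
  obtain ⟨x, hx⟩ := IsCompact.nonempty_iInter_of_sequence_nonempty_isCompact_isClosed K
    (fun k x hx i hi => hx i (Nat.lt_succ_of_lt hi)) hK_nonempty (hK_closed 0).isCompact hK_closed
  exact ⟨x, code_eq_iff.2 fun i => Set.mem_iInter.1 hx (i + 1) i (Nat.lt_succ_self i)⟩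

theorem nonempty_homeomorph_of_isIndependent [CompactSpace X] [Nonempty X]
    (hC : ∀ i, IsClopen (C i)) (hind : IsIndependent C) (hinj : Function.Injective (code C)) :
    Nonempty (X ≃ₜ (ℕ → Bool)) :=
  ⟨(continuous_code hC).homeoOfEquivCompactToT2
    (f := Equiv.ofBijective _ ⟨hinj, code_surjective hC hind⟩)⟩

lemma isClopen_cut {a : Set X} (hU : IsClopen (U k)) (hS : IsClopen (S a)) :
    IsClopen (cut (U k) S a) := by
  unfold cut
  split_ifs
  exacts [hU, hS]

variable (hU : ∀ n, IsClopen (U n))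
  (hS : ∀ a, IsOpen a ∧ a.Nonempty → IsClopen (S a) ∧ (a ∩ S a).Nonempty ∧ (a \ S a).Nonempty)
include hU hS

lemma isClopen_cutSeq (k : ℕ) : IsClopen (cutSeq U S k) := by
  induction k using Nat.strong_induction_on with
  | _ k ih =>
    rw [cutSeq_eq]
    exact isClopen_setOf_mem_cell ih fun x =>
      isClopen_cut (hU k) (hS _ ⟨(isClopen_cell ih).isOpen, x, mem_cell_self⟩).1

lemma isIndependent_cutSeq : IsIndependent (cutSeq U S) := by
  intro k x
  have hcell := isClopen_cell (k := k) (x := x) fun i _ => isClopen_cutSeq hU hS i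
  obtain ⟨⟨y, hy, hyC⟩, ⟨z, hz, hzC⟩⟩ :=
    cut_split (U := U) (k := k) (hS _ ⟨hcell.isOpen, x, mem_cell_self⟩).2
  exact ⟨⟨y, hy, (mem_cutSeq_iff hy).2 hyC⟩, ⟨z, hz, mt (mem_cutSeq_iff hz).1 hzC⟩⟩

end ClopenSeq

section Brouwer

variable {X : Type*} [TopologicalSpace X]

lemma exists_seq_isClopen_separating [CompactSpace X] [T2Space X] [SecondCountableTopology X]
    [TotallyDisconnectedSpace X] [Nonempty X] :
    ∃ U : ℕ → Set X, (∀ n, IsClopen (U n)) ∧ ∀ x y, x ≠ y → ∃ n, x ∈ U n ∧ y ∉ U n := by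
  obtain ⟨B, hB_clopen, hB_countable, hB⟩ :=
    (isTopologicalBasis_isClopen (X := X)).exists_countable
  obtain ⟨V, hV, -, -⟩ := hB.exists_subset_of_mem_open (Set.mem_univ (Classical.arbitrary X))
    isOpen_univ
  obtain ⟨U, rfl⟩ := hB_countable.exists_eq_range ⟨V, hV⟩
  refine ⟨U, fun n => hB_clopen ⟨n, rfl⟩, fun x y hxy => ?_⟩
  obtain ⟨_, ⟨n, rfl⟩, hx, hU⟩ := hB.exists_subset_of_mem_open hxy isOpen_compl_singleton
  exact ⟨n, hx, fun hy => hU hy rfl⟩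

lemma IsOpen.exists_isClopen_split [PerfectSpace X] [TotallySeparatedSpace X] {a : Set X}
    (ha : IsOpen a) (hne : a.Nonempty) :
    ∃ V, IsClopen V ∧ (a ∩ V).Nonempty ∧ (a \ V).Nonempty := by
  obtain ⟨x, hx⟩ := hne
  obtain ⟨y, hyx, hy⟩ := (accPt_iff_frequently.1 (ha.preperfect x hx)).exists
  obtain ⟨V, hV, hxV, hyV⟩ := exists_isClopen_of_totally_separated hyx.symm
  exact ⟨V, hV, ⟨x, hx, hxV⟩, ⟨y, hy, hyV⟩⟩

end Brouwer

open ClopenSeq in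
theorem nonempty_homeomorph_cantorSpace (X : Type*) [TopologicalSpace X] [CompactSpace X]
    [T2Space X] [SecondCountableTopology X] [TotallyDisconnectedSpace X] [PerfectSpace X]
    [Nonempty X] : Nonempty (X ≃ₜ (ℕ → Bool)) := by
  obtain ⟨U, hU, hsep⟩ := exists_seq_isClopen_separating (X := X)
  choose! S hS using fun (a : Set X) (h : IsOpen a ∧ a.Nonempty) => h.1.exists_isClopen_split h.2
  exact nonempty_homeomorph_of_isIndependent (isClopen_cutSeq hU hS)
    (isIndependent_cutSeq hU hS) (code_cutSeq_injective hsep)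

lemma ZMod.exists_fin_three_coloring {n : ℕ} (hn : n ≠ 1) :
    ∃ f : ZMod n → Fin 3, ∀ a, f (a + 1) ≠ f a := by
  obtain _ | _ | m := n
  -- `ZMod 0` is `ℤ`
  · have hℤ : ∀ a : ℤ, (if Even (a + 1) then 0 else 1 : Fin 3) ≠ if Even a then 0 else 1 := by
      intro a
      by_cases ha : Even a <;> simp [ha]
    exact ⟨fun a : ℤ => if Even a then 0 else 1, hℤ⟩
  · exact absurd rfl hn
  · refine ⟨fun a => if a.val = m + 1 then 2 else if a.val % 2 = 0 then 0 else 1, fun a => ?_⟩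
    have : Fact (1 < m + 2) := ⟨by omega⟩
    have hlt := a.val_lt
    have hsucc : (a + 1).val = 0 ∧ a.val = m + 1 ∨ (a + 1).val = a.val + 1 := by
      rw [ZMod.val_add, ZMod.val_one]
      rcases eq_or_ne a.val (m + 1) with h | h
      · exact Or.inl ⟨by rw [h, Nat.mod_self], h⟩
      · exact Or.inr (Nat.mod_eq_of_lt (by omega))
    dsimp only
    split_ifs <;> first | decide | omega

section Coloring

variable {G : Type*} [Group G]

open Subgroup QuotientGroup in
lemma exists_zmod_orderOf_mul_left (s : G) :
    ∃ π : G → ZMod (orderOf s), ∀ x, π (s * x) = π x + 1 := by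
  let r : G → G := fun x => (Quotient.mk (rightRel (zpowers s)) x).out
  have hr_mul : ∀ x, r (s * x) = r x := fun x =>
    congrArg Quotient.out (Quotient.sound (rightRel_apply.2 (by simp)))
  have hr : ∀ x, ∃ k : ℤ, s ^ k = x * (r x)⁻¹ := fun x =>
    mem_zpowers_iff.1 (rightRel_apply.1 (Quotient.mk_out x))
  choose k hk using hr
  refine ⟨fun x => k x, fun x => ?_⟩
  have hpow : s ^ k (s * x) = s ^ (1 + k x) := by
    rw [hk, hr_mul, zpow_one_add, hk, mul_assoc]
  rw [add_comm, ← Int.cast_one, ← Int.cast_add, ZMod.intCast_eq_intCast_iff]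
  exact zpow_eq_zpow_iff_modEq.1 hpow

lemma exists_fin_three_coloring_mul_left {s : G} (hs : s ≠ 1) :
    ∃ c : G → Fin 3, ∀ x, c (s * x) ≠ c x := by
  obtain ⟨π, hπ⟩ := exists_zmod_orderOf_mul_left s
  obtain ⟨f, hf⟩ := ZMod.exists_fin_three_coloring (mt orderOf_eq_one_iff.1 hs)
  exact ⟨f ∘ π, fun x => by simpa only [Function.comp, hπ] using hf (π x)⟩

end Coloring

section FreeColorings

variable (Γ : Type*) [Group Γ]

def freeColorings : Set ({s : Γ // s ≠ 1} → Γ → Fin 3) :=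
  {c | ∀ s x, c s (s.1 * x) ≠ c s x}

lemma isClosed_freeColorings : IsClosed (freeColorings Γ) := by
  simp only [freeColorings, Set.ofPred_forall]
  exact isClosed_iInter fun s => isClosed_iInter fun x =>
    (isClosed_discrete {p : Fin 3 × Fin 3 | p.1 ≠ p.2}).preimage
      (f := fun c : {s : Γ // s ≠ 1} → Γ → Fin 3 => (c s (s.1 * x), c s x)) (by fun_prop)

instance : CompactSpace (freeColorings Γ) :=
  isCompact_iff_compactSpace.1 (isClosed_freeColorings Γ).isCompact

instance : Nonempty (freeColorings Γ) := by
  choose c hc using fun s : {s : Γ // s ≠ 1} => exists_fin_three_coloring_mul_left s.2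
  exact ⟨⟨c, hc⟩⟩

instance : MulAction Γ (freeColorings Γ) where
  smul g c := ⟨fun s x => c.1 s (x * g), fun s x => by simpa only [mul_assoc] using c.2 s (x * g)⟩
  one_smul c := Subtype.ext <| funext₂ fun s x => congrArg (c.1 s) (mul_one x)
  mul_smul g h c := Subtype.ext <| funext₂ fun s x => congrArg (c.1 s) (mul_assoc x g h).symm

variable {Γ}

lemma freeColorings.smul_apply (g : Γ) (c : freeColorings Γ) (s : {s : Γ // s ≠ 1}) (x : Γ) :
    (g • c).1 s x = c.1 s (x * g) :=
  rfl

instance : ContinuousConstSMul Γ (freeColorings Γ) :=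
  ⟨fun g => .subtype_mk (f := fun c : freeColorings Γ => fun s x => c.1 s (x * g))
    (continuous_pi fun s => continuous_pi fun _ =>
      (continuous_apply _).comp ((continuous_apply s).comp continuous_subtype_val)) _⟩

lemma freeColorings.smul_ne_self {g : Γ} (hg : g ≠ 1) (c : freeColorings Γ) : g • c ≠ c :=
  fun h => c.2 ⟨g, hg⟩ 1 <| by
    simpa [freeColorings.smul_apply] using congrFun (congrFun (congrArg Subtype.val h) ⟨g, hg⟩) 1

end FreeColorings

instance Prod.perfectSpace_of_right {Y Z : Type*} [TopologicalSpace Y] [TopologicalSpace Z]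
    [PerfectSpace Z] : PerfectSpace (Y × Z) := by
  refine perfectSpace_iff_forall_not_isolated.2 fun p => ?_
  have : Filter.Tendsto (fun z => (p.1, z)) (nhdsWithin p.2 {p.2}ᶜ) (nhdsWithin p {p}ᶜ) :=
    (continuous_const.prodMk continuous_id).continuousWithinAt.tendsto_nhdsWithin
      fun z hz h => hz (congrArg Prod.snd h)
  exact this.neBot

def smulFstHom (Γ K X : Type*) [Group Γ] [TopologicalSpace K] [TopologicalSpace X]
    [MulAction Γ K] [ContinuousConstSMul Γ K] : Γ →* (K × X ≃ₜ K × X) where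
  toFun g := (Homeomorph.smul g).prodCongr (Homeomorph.refl X)
  map_one' := Homeomorph.ext fun p => Prod.ext (one_smul Γ p.1) rfl
  map_mul' g h := Homeomorph.ext fun p => Prod.ext (mul_smul g h p.1) rfl

def Homeomorph.conjHom {Y Z : Type*} [TopologicalSpace Y] [TopologicalSpace Z] (e : Y ≃ₜ Z) :
    (Y ≃ₜ Y) →* (Z ≃ₜ Z) where
  toFun φ := e.symm.trans (φ.trans e)
  map_one' := Homeomorph.ext e.apply_symm_apply
  map_mul' φ _ := Homeomorph.ext fun _ => congrArg (e ∘ φ) (e.symm_apply_apply _).symm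

/-- Every countable group `Γ` admits a free action on the Cantor set `X`:
a homomorphism `α : Γ → Homeo(X)` such that every `s ≠ e` acts without fixed points. -/
theorem exists_free_cantor_system (Γ X : Type*) [Group Γ] [Countable Γ]
    [TopologicalSpace X] [CompactSpace X] [MetrizableSpace X]
    [TotallyDisconnectedSpace X] [PerfectSpace X] [Nonempty X] :
    ∃ α : Γ →* (X ≃ₜ X), ∀ s : Γ, s ≠ 1 → ∀ x : X, α s x ≠ x := by
  obtain ⟨eX⟩ := nonempty_homeomorph_cantorSpace X
  obtain ⟨eY⟩ := nonempty_homeomorph_cantorSpace (freeColorings Γ × X)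
  let e := eY.trans eX.symm
  refine ⟨e.conjHom.comp (smulFstHom Γ (freeColorings Γ) X), fun s hs x hx => ?_⟩
  exact freeColorings.smul_ne_self hs (e.symm x).1 (congrArg Prod.fst (e.eq_symm_apply.2 hx))
end

section
/- Let Γ be a countable group that admits at least one amenable action on the Cantor set X. Then the set of amenable actions is a dense Gδ subset of S(Γ,X). -/
open TopologicalSpace

/-!
The amenable actions are the intersection, over `n : ℕ` and finite `S ⊆ Γ`, of the sets of
actions admitting `1/(n+1)`-almost invariant continuous means on `S`. A continuous mean
`μ : X → Prob(Γ)` is uniformly continuous and a nearby action moves every point only a little,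
so each such set contains a neighbourhood of each of its points once `1/(n+1)` is replaced by
a larger bound; hence the amenable actions form a `Gδ`.

For density, Brouwer's theorem identifies `X` with `ℕ → Bool`, which yields homeomorphisms
`ψ : X × X ≃ₜ X` converging uniformly to the first projection. Given any action `β` and an
amenable action `α₀`, the conjugates `ψ ∘ (β × α₀) ∘ ψ⁻¹` converge to `β`, and they are amenable
because `x ↦ (ψ⁻¹ x).2` is an equivariant factor map onto `α₀`.
-/

open Filter Topology PiNat

namespace TopologicalSpace.Clopens

variable {X : Type*} [TopologicalSpace X]

def Splits (D C : Clopens X) : Prop := (∃ x ∈ C, x ∈ D) ∧ ∃ x ∈ C, x ∉ D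

variable [TotallySeparatedSpace X] [PerfectSpace X]

theorem exists_splits {C : Clopens X} (hC : (C : Set X).Nonempty) :
    ∃ D : Clopens X, D.Splits C := by
  obtain ⟨x, hx⟩ := hC
  obtain ⟨y, hyC, hyx⟩ : ∃ y ∈ C, y ≠ x := by
    have : (C : Set X) ∈ 𝓝[≠] x := mem_nhdsWithin_of_mem_nhds (C.isOpen.mem_nhds hx)
    exact Filter.nonempty_of_mem (inter_mem this self_mem_nhdsWithin)
  obtain ⟨U, hU, hxU, hyU⟩ := exists_isClopen_of_totally_separated hyx.symm
  exact ⟨⟨U, hU⟩, ⟨x, hx, hxU⟩, y, hyC, hyU⟩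

open Classical in
noncomputable def splitting (C V : Clopens X) : Clopens X :=
  if V.Splits C then V else if h : (C : Set X).Nonempty then (exists_splits h).choose else V

theorem splitting_of_splits {C V : Clopens X} (h : V.Splits C) : splitting C V = V :=
  if_pos h

theorem splitting_splits {C : Clopens X} (hC : (C : Set X).Nonempty) (V : Clopens X) :
    (splitting C V).Splits C := by
  unfold splitting
  split_ifs with hV
  · exact hV
  · exact (exists_splits hC).choose_spec

end TopologicalSpace.Clopens

namespace CantorCoding

open scoped Classical
open TopologicalSpace TopologicalSpace.Clopens

variable {X : Type*} [TopologicalSpace X] [TotallySeparatedSpace X] [PerfectSpace X]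
  (V : ℕ → Clopens X)

/-- The cell with address `b₀ … b_{n-1}` (stored as `[b_{n-1}, …, b₀]`, as in `PiNat.res`) is
cut in two by `V n` if possible. Once the `V n` separate points, every point is determined by
the sequence of halves it lies in. -/
noncomputable def cell : List Bool → Clopens X
  | [] => ⊤
  | b :: l => if b then cell l ⊓ splitting (cell l) (V l.length)
      else cell l \ splitting (cell l) (V l.length)

theorem mem_cell_cons {x : X} {b : Bool} {l : List Bool} :
    x ∈ cell V (b :: l) ↔
      x ∈ cell V l ∧ decide (x ∈ splitting (cell V l) (V l.length)) = b := by
  cases b <;> simp [cell, ← SetLike.mem_coe]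

theorem cell_nonempty [Nonempty X] : ∀ l, (cell V l : Set X).Nonempty
  | [] => Set.univ_nonempty
  | b :: l => by
    obtain ⟨⟨x, hxC, hxD⟩, y, hyC, hyD⟩ := splitting_splits (cell_nonempty l) (V l.length)
    cases b
    · exact ⟨y, (mem_cell_cons V).2 ⟨hyC, by simpa using hyD⟩⟩
    · exact ⟨x, (mem_cell_cons V).2 ⟨hxC, by simpa using hxD⟩⟩

noncomputable def address (x : X) : ℕ → List Bool
  | 0 => []
  | n + 1 => decide (x ∈ splitting (cell V (address x n)) (V n)) :: address x n

noncomputable def code (x : X) (n : ℕ) : Bool :=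
  decide (x ∈ splitting (cell V (address V x n)) (V n))

theorem address_eq_res (x : X) (n : ℕ) : address V x n = res (code V x) n := by
  induction n with
  | zero => rfl
  | succ n ih => rw [res_succ, ← ih]; rfl

theorem mem_cell_res_code (x : X) (n : ℕ) : x ∈ cell V (res (code V x) n) := by
  induction n with
  | zero => trivial
  | succ n ih =>
    rw [res_succ, mem_cell_cons, res_length, ← address_eq_res]
    exact ⟨address_eq_res V x n ▸ ih, rfl⟩

theorem eq_res_code_of_mem_cell {x : X} : ∀ {l : List Bool}, x ∈ cell V l →
    l = res (code V x) l.length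
  | [], _ => rfl
  | b :: l, h => by
    obtain ⟨hl, hb⟩ := (mem_cell_cons V).1 h
    have ih := eq_res_code_of_mem_cell hl
    rw [List.length_cons, res_succ, ← ih, ← hb, code, address_eq_res, ← ih]

theorem continuous_code : Continuous (code V) := by
  refine continuous_pi fun n => continuous_discrete_rng.2 fun b => ?_
  refine isOpen_iff_forall_mem_open.2 fun x hx => ⟨cell V (res (code V x) (n + 1)),
    fun y hy => ?_, (cell V _).isOpen, mem_cell_res_code V x _⟩
  have hres := eq_res_code_of_mem_cell V hy
  rw [res_length, res_succ, res_succ] at hres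
  exact (List.cons.inj hres).1.symm.trans hx

theorem injective_code (hV : ∀ x y : X, x ≠ y → ∃ n, x ∈ V n ∧ y ∉ V n) :
    Function.Injective (code V) := by
  intro x y hxy
  by_contra hne
  obtain ⟨n, hx, hy⟩ := hV x y hne
  have hyC : y ∈ cell V (res (code V x) n) := hxy ▸ mem_cell_res_code V y n
  have hD : splitting (cell V (res (code V x) n)) (V n) = V n :=
    splitting_of_splits ⟨⟨x, mem_cell_res_code V x n, hx⟩, y, hyC, hy⟩
  have hn := congrFun hxy n
  rw [code, code, address_eq_res, address_eq_res, ← hxy, hD] at hn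
  simp [hx, hy] at hn

theorem surjective_code [CompactSpace X] [Nonempty X] : Function.Surjective (code V) := by
  intro b
  obtain ⟨x, hx⟩ := IsCompact.nonempty_iInter_of_sequence_nonempty_isCompact_isClosed
    (fun n => (cell V (res b n) : Set X))
    (fun n y hy => ((mem_cell_cons V).1 hy).1) (fun n => cell_nonempty V _)
    (cell V _).isClosed.isCompact (fun n => (cell V _).isClosed)
  refine ⟨x, res_injective (funext fun n => ?_)⟩
  have hres := eq_res_code_of_mem_cell V (Set.mem_iInter.1 hx n)
  rw [res_length] at hres
  exact hres.symm

end CantorCoding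

theorem nonempty_homeomorph_natToBool (X : Type*) [TopologicalSpace X] [CompactSpace X]
    [T2Space X] [TotallyDisconnectedSpace X] [SecondCountableTopology X] [PerfectSpace X]
    [Nonempty X] : Nonempty (X ≃ₜ (ℕ → Bool)) := by
  have : Countable (Clopens X) := Clopens.countable_iff_secondCountable.2 ‹_›
  obtain ⟨V, hV⟩ := exists_surjective_nat (Clopens X)
  have hsep : ∀ x y : X, x ≠ y → ∃ n, x ∈ V n ∧ y ∉ V n := fun x y hxy => by
    obtain ⟨U, hU, hxU, hyU⟩ := exists_isClopen_of_totally_separated hxy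
    obtain ⟨n, hn⟩ := hV ⟨U, hU⟩
    exact ⟨n, hn ▸ hxU, hn ▸ hyU⟩
  exact ⟨(CantorCoding.continuous_code V).homeoOfEquivCompactToT2
    (f := .ofBijective _ ⟨CantorCoding.injective_code V hsep, CantorCoding.surjective_code V⟩)⟩

/-- `(a, b) ↦ a₀ ⋯ a_{N-1} a_N b₀ a_{N+1} b₁ ⋯` -/
def prodCantorEquiv (N : ℕ) : (ℕ → Bool) × (ℕ → Bool) ≃ (ℕ → Bool) where
  toFun p n := if n < N then p.1 n else if (n - N) % 2 = 0 then p.1 (N + (n - N) / 2)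
    else p.2 ((n - N) / 2)
  invFun z := (fun n => if n < N then z n else z (N + 2 * (n - N)), fun k => z (N + 2 * k + 1))
  left_inv p := by
    ext n <;> dsimp only <;> split_ifs <;> first | rfl | omega | exact congrArg _ (by omega)
  right_inv z := by
    funext n
    dsimp only
    split_ifs <;> first | rfl | omega | exact congrArg _ (by omega)

theorem continuous_prodCantorEquiv (N : ℕ) : Continuous (prodCantorEquiv N) := by
  refine continuous_pi fun n => ?_
  simp only [prodCantorEquiv, Equiv.coe_fn_mk]
  split_ifs <;> fun_prop

noncomputable def prodCantorHomeomorph (N : ℕ) : (ℕ → Bool) × (ℕ → Bool) ≃ₜ (ℕ → Bool) :=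
  (continuous_prodCantorEquiv N).homeoOfEquivCompactToT2

theorem prodCantorHomeomorph_apply_of_lt {N n : ℕ} (h : n < N) (p : (ℕ → Bool) × (ℕ → Bool)) :
    prodCantorHomeomorph N p n = p.1 n :=
  if_pos h

theorem tendstoUniformly_prodCantorHomeomorph :
    TendstoUniformly (fun N p => prodCantorHomeomorph N p) Prod.fst atTop := by
  rw [tendstoUniformly_iff_tendsto, Pi.uniformity, tendsto_iInf]
  intro n
  rw [tendsto_comap_iff, DiscreteUniformity.eq_principal_setRelId Bool, tendsto_principal]
  filter_upwards [(eventually_gt_atTop n).prod_inl ⊤] with q hq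
  simp [prodCantorHomeomorph_apply_of_lt hq, SetRel.id]

theorem exists_homeomorph_prod_tendstoUniformly_fst {X : Type*} [UniformSpace X] [CompactSpace X]
    (e : X ≃ₜ (ℕ → Bool)) :
    ∃ ψ : ℕ → (X × X ≃ₜ X), TendstoUniformly (fun N p => ψ N p) Prod.fst atTop := by
  refine ⟨fun N => (e.prodCongr e).trans ((prodCantorHomeomorph N).trans e.symm), ?_⟩
  have h := ((CompactSpace.uniformContinuous_of_continuous e.symm.continuous).comp_tendstoUniformly
    tendstoUniformly_prodCantorHomeomorph).comp (Prod.map e e)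
  simpa [Function.comp_def] using h

section ActionSpace

variable {Γ X : Type*} [Group Γ] [TopologicalSpace X]

theorem continuous_coe_apply (s : Γ) :
    Continuous fun α : Γ →* (X ≃ₜ X) => ((α s : X ≃ₜ X) : C(X, X)) := by
  have hcoe : Continuous fun φ : X ≃ₜ X => (φ : C(X, X)) :=
    continuous_fst.comp
      (continuous_induced_dom (f := fun φ : X ≃ₜ X => ((φ : C(X, X)), (φ.symm : C(X, X)))))
  have heval : Continuous fun α : Γ →* (X ≃ₜ X) => α s :=
    (continuous_apply s).comp continuous_induced_dom
  exact hcoe.comp heval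

theorem tendsto_nhds_of_tendsto_coe_apply {ι : Type*} {l : Filter ι}
    {F : ι → Γ →* (X ≃ₜ X)} {α : Γ →* (X ≃ₜ X)}
    (h : ∀ s, Tendsto (fun i => ((F i s : X ≃ₜ X) : C(X, X))) l (𝓝 (α s : C(X, X)))) :
    Tendsto F l (𝓝 α) := by
  rw [Topology.IsInducing.tendsto_nhds_iff ⟨rfl⟩, tendsto_pi_nhds]
  intro s
  rw [Topology.IsInducing.tendsto_nhds_iff ⟨rfl⟩]
  have hinv : ∀ β : Γ →* (X ≃ₜ X), (β s).symm = β s⁻¹ := fun β => (map_inv β s).symm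
  simpa only [Function.comp_def, hinv] using (h s).prodMk_nhds (h s⁻¹)

variable {Y : Type*} [TopologicalSpace Y]

def conjProdAction (ψ : X × Y ≃ₜ X) (β : Γ →* (X ≃ₜ X)) (α : Γ →* (Y ≃ₜ Y)) :
    Γ →* (X ≃ₜ X) where
  toFun s := (ψ.symm.trans ((β s).prodCongr (α s))).trans ψ
  map_one' := by
    ext x
    simp only [map_one]
    exact ψ.apply_symm_apply x
  map_mul' s t := by
    ext x
    change ψ ((β (s * t)).prodCongr (α (s * t)) (ψ.symm x)) =
      ψ ((β s).prodCongr (α s) (ψ.symm (ψ ((β t).prodCongr (α t) (ψ.symm x)))))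
    rw [ψ.symm_apply_apply, map_mul, map_mul]
    rfl

theorem conjProdAction_apply (ψ : X × Y ≃ₜ X) (β : Γ →* (X ≃ₜ X)) (α : Γ →* (Y ≃ₜ Y))
    (s : Γ) (x : X) :
    conjProdAction ψ β α s x = ψ (β s (ψ.symm x).1, α s (ψ.symm x).2) :=
  rfl

theorem IsAmenableAction.of_factor {α : Γ →* (X ≃ₜ X)} (hα : IsAmenableAction α)
    {β : Γ →* (Y ≃ₜ Y)} (p : C(Y, X)) (hp : ∀ s y, p (β s y) = α s (p y)) :
    IsAmenableAction β := by
  intro ε hε S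
  obtain ⟨μ, hnonneg, hnorm, hinv⟩ := hα ε hε S
  exact ⟨μ.comp p, fun y => hnonneg (p y), fun y => hnorm (p y),
    fun s hs y => by simpa [hp] using hinv s hs (p y)⟩

theorem IsAmenableAction.conjProdAction {α : Γ →* (Y ≃ₜ Y)} (hα : IsAmenableAction α)
    (ψ : X × Y ≃ₜ X) (β : Γ →* (X ≃ₜ X)) : IsAmenableAction (conjProdAction ψ β α) :=
  hα.of_factor ⟨fun x => (ψ.symm x).2, by fun_prop⟩ fun s x => by
    simp [conjProdAction_apply]

end ActionSpace

theorem lp.summable_abs {ι : Type*} (f : lp (fun _ : ι => ℝ) 1) : Summable fun t => |f t| := by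
  simpa using (lp.memℓp f).summable (p := 1) one_pos

theorem tsum_abs_sub_le_tsum_abs_sub_add_norm {ι : Type*} {a : ι → ℝ}
    (ha : Summable fun t => |a t|) (g g' : lp (fun _ : ι => ℝ) 1) :
    ∑' t, |a t - g t| ≤ ∑' t, |a t - g' t| + ‖g' - g‖ := by
  have hsub : ∀ f : lp (fun _ : ι => ℝ) 1, Summable fun t => |a t - f t| := fun f =>
    (ha.add (lp.summable_abs f)).of_nonneg_of_le (fun _ => abs_nonneg _) (fun t => abs_sub _ _)
  have hdiff : Summable fun t => |g' t - g t| := by simpa using lp.summable_abs (g' - g)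
  have hnorm : ‖g' - g‖ = ∑' t, |g' t - g t| := by
    simp [lp.norm_eq_tsum_rpow (zero_lt_one.trans_eq ENNReal.toReal_one.symm)]
  calc ∑' t, |a t - g t| ≤ ∑' t, (|a t - g' t| + |g' t - g t|) :=
        (hsub g).tsum_le_tsum (fun t => abs_sub_le _ _ _) ((hsub g').add hdiff)
    _ = ∑' t, |a t - g' t| + ‖g' - g‖ := by rw [(hsub g').tsum_add hdiff, hnorm]

section AlmostInvariantMeans

variable {Γ X : Type*} [Group Γ] [TopologicalSpace X]

def HasAlmostInvariantMeans (α : Γ →* (X ≃ₜ X)) (ε : ℝ) (S : Finset Γ) : Prop :=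
  ∃ μ : C(X, ↥(lp (fun _ : Γ => ℝ) 1)),
    (∀ (x : X) (t : Γ), 0 ≤ μ x t) ∧
    (∀ x : X, ‖μ x‖ = 1) ∧
    ∀ s ∈ S, ∀ x : X, (∑' t : Γ, |μ x (s⁻¹ * t) - μ (α s x) t|) < ε

theorem isAmenableAction_iff {α : Γ →* (X ≃ₜ X)} :
    IsAmenableAction α ↔ ∀ ε, 0 < ε → ∀ S, HasAlmostInvariantMeans α ε S :=
  Iff.rfl

theorem HasAlmostInvariantMeans.mono {α : Γ →* (X ≃ₜ X)} {η ε : ℝ} {S : Finset Γ}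
    (h : HasAlmostInvariantMeans α η S) (hηε : η ≤ ε) : HasAlmostInvariantMeans α ε S :=
  let ⟨μ, hnonneg, hnorm, hinv⟩ := h
  ⟨μ, hnonneg, hnorm, fun s hs x => (hinv s hs x).trans_le hηε⟩

end AlmostInvariantMeans

section Gdelta

variable {Γ X : Type*} [Group Γ] [MetricSpace X] [CompactSpace X]

theorem HasAlmostInvariantMeans.eventually_nhds {α : Γ →* (X ≃ₜ X)} {η ε : ℝ} {S : Finset Γ}
    (h : HasAlmostInvariantMeans α η S) (hηε : η < ε) : ∀ᶠ β in 𝓝 α, HasAlmostInvariantMeans β ε S := by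
  obtain ⟨μ, hnonneg, hnorm, hinv⟩ := h
  obtain ⟨δ, hδ, hμδ⟩ := Metric.uniformContinuous_iff.1
    (CompactSpace.uniformContinuous_of_continuous μ.continuous) (ε - η) (sub_pos.2 hηε)
  have hnear : ∀ᶠ β in 𝓝 α, ∀ s ∈ S, dist ((β s : X ≃ₜ X) : C(X, X)) (α s) < δ :=
    (eventually_all_finset S).2 fun s _ =>
      ((continuous_coe_apply (X := X) s).continuousAt (x := α)).eventually_mem
        (Metric.ball_mem_nhds _ hδ)
  filter_upwards [hnear] with β hβ
  refine ⟨μ, hnonneg, hnorm, fun s hs x => ?_⟩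
  have hx : dist (α s x) (β s x) < δ :=
    dist_comm (β s x) _ ▸ (ContinuousMap.dist_apply_le_dist x).trans_lt (hβ s hs)
  calc ∑' t, |μ x (s⁻¹ * t) - μ (β s x) t|
      ≤ ∑' t, |μ x (s⁻¹ * t) - μ (α s x) t| + ‖μ (α s x) - μ (β s x)‖ :=
        tsum_abs_sub_le_tsum_abs_sub_add_norm
          ((lp.summable_abs (μ x)).comp_injective (mul_right_injective s⁻¹)) _ _
    _ < η + (ε - η) := add_lt_add (hinv s hs x) (dist_eq_norm (μ _) _ ▸ hμδ hx)
    _ = ε := add_sub_cancel η ε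

theorem isGδ_setOf_isAmenableAction [Countable Γ] :
    IsGδ {α : Γ →* (X ≃ₜ X) | IsAmenableAction α} := by
  have hinter : {α : Γ →* (X ≃ₜ X) | IsAmenableAction α} =
      ⋂ p : ℕ × Finset Γ, interior {β | HasAlmostInvariantMeans β (1 / (p.1 + 1)) p.2} := by
    ext α
    simp only [Set.mem_ofPred_eq, isAmenableAction_iff, Set.mem_iInter, mem_interior_iff_mem_nhds,
      Prod.forall]
    refine ⟨fun h n S => ?_, fun h ε hε S => ?_⟩
    · have hlt : (1 : ℝ) / (n + 2) < 1 / (n + 1) := by gcongr; linarith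
      exact (h _ (by positivity) S).eventually_nhds hlt
    · obtain ⟨n, hn⟩ := exists_nat_one_div_lt hε
      exact (mem_of_mem_nhds (h n S)).mono hn.le
  rw [hinter]
  exact .iInter_of_isOpen fun _ => isOpen_interior

end Gdelta

section Density

variable {Γ X Y : Type*} [Group Γ] [MetricSpace X] [TopologicalSpace Y]

theorem TendstoUniformly.conj_prodMap {ι : Type*} {l : Filter ι} {ψ : ι → (X × Y ≃ₜ X)}
    (hψ : TendstoUniformly (fun i p => ψ i p) Prod.fst l) {f : X → X} (hf : UniformContinuous f)
    (g : Y → Y) :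
    TendstoUniformly (fun i x => ψ i (f ((ψ i).symm x).1, g ((ψ i).symm x).2)) f l := by
  rw [Metric.tendstoUniformly_iff] at hψ ⊢
  intro ε hε
  obtain ⟨δ, hδ, hfδ⟩ := Metric.uniformContinuous_iff.1 hf (ε / 2) (half_pos hε)
  filter_upwards [hψ (min δ (ε / 2)) (lt_min hδ (half_pos hε))] with i hi x
  set p := (ψ i).symm x
  have hx : dist p.1 x < δ := by
    simpa only [p, Homeomorph.apply_symm_apply] using (hi p).trans_le (min_le_left _ _)
  calc dist (f x) (ψ i (f p.1, g p.2))
      ≤ dist (f x) (f p.1) + dist (f p.1) (ψ i (f p.1, g p.2)) := dist_triangle _ _ _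
    _ < ε / 2 + ε / 2 :=
        add_lt_add (hfδ (by rwa [dist_comm])) ((hi (f p.1, g p.2)).trans_le (min_le_right _ _))
    _ = ε := add_halves ε

theorem dense_setOf_isAmenableAction [CompactSpace X] {ψ : ℕ → (X × Y ≃ₜ X)}
    (hψ : TendstoUniformly (fun N p => ψ N p) Prod.fst atTop)
    (h : ∃ α : Γ →* (Y ≃ₜ Y), IsAmenableAction α) :
    Dense {β : Γ →* (X ≃ₜ X) | IsAmenableAction β} := by
  obtain ⟨α, hα⟩ := h
  intro β
  refine mem_closure_of_tendsto (f := fun N => conjProdAction (ψ N) β α) (b := atTop) ?_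
    (Eventually.of_forall fun N => hα.conjProdAction (ψ N) β)
  refine tendsto_nhds_of_tendsto_coe_apply fun s => ?_
  rw [ContinuousMap.tendsto_iff_tendstoUniformly]
  exact hψ.conj_prodMap (CompactSpace.uniformContinuous_of_continuous (β s).continuous) (α s)

end Density

/-- If a countable group `Γ` admits at least one amenable action on the Cantor set
`X`, then the set of amenable actions is a dense `Gδ` subset of `S(Γ, X)`. -/
theorem amenability_isGdelta_dense (Γ X : Type*) [Group Γ] [Countable Γ]
    [TopologicalSpace X] [CompactSpace X] [MetrizableSpace X]
    [TotallyDisconnectedSpace X] [PerfectSpace X] [Nonempty X]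
    (h : ∃ α : Γ →* (X ≃ₜ X), IsAmenableAction α) :
    IsGδ {α : Γ →* (X ≃ₜ X) | IsAmenableAction α} ∧
    Dense {α : Γ →* (X ≃ₜ X) | IsAmenableAction α} := by
  let : MetricSpace X := metrizableSpaceMetric X
  obtain ⟨e⟩ := nonempty_homeomorph_natToBool X
  obtain ⟨ψ, hψ⟩ := exists_homeomorph_prod_tendstoUniformly_fst e
  exact ⟨isGδ_setOf_isAmenableAction, dense_setOf_isAmenableAction hψ h⟩
end

section
/- Let Γ = ∗_{i∈ℕ} Γ_i be the free product of a countably infinite family of countable groups, each containing an element of infinite order, and let α ∈ S(Γ,X) be an action on the Cantor set X satisfying property R. Then α is prime: for every compact metrizable space Y equipped with an action of Γ by homeomorphisms and every Γ-equivariant continuous surjection π : X → Y, either Y is a single point or π is injective (hence a homeomorphism). -/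
open TopologicalSpace

/-- Property `R` of an action `α` of the infinite free product `∗_{i∈ℕ} G i` on the
Cantor set `X`: for every finite family `U 0, …, U (n-1)` of pairwise disjoint
nonempty proper clopen subsets of `X`, there are infinitely many `i ∈ ℕ` such that
`G i` contains an infinite-order element `s` with `α_s (U j) = U (j+1)` for all `j`
(indices cyclically, i.e. in `Fin n`). -/
def PropertyR {G : ℕ → Type*} [∀ i, Group (G i)] {X : Type*} [TopologicalSpace X]
    (α : Monoid.CoprodI G →* (X ≃ₜ X)) : Prop :=
  ∀ (n : ℕ) [NeZero n] (U : Fin n → Set X),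
    (∀ i, IsClopen (U i)) → (∀ i, (U i).Nonempty) → (∀ i, U i ≠ Set.univ) →
    Pairwise (Function.onFun Disjoint U) →
    {i : ℕ | ∃ s : G i, ¬ IsOfFinOrder s ∧
      ∀ j : Fin n, α (Monoid.CoprodI.of s) '' U j = U (j + 1)}.Infinite

/-- Let `Γ = ∗_{i∈ℕ} G i` be the free product of countably many countable groups,
each containing an element of infinite order, and let `α` be a Cantor system of `Γ`
with property `R`. Then `α` is prime: for every compact metrizable space `Y` with an
action `β` of `Γ` and every `Γ`-equivariant continuous surjection `π : X → Y`,
either `Y` is a single point or `π` is injective. -/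
theorem propertyR_implies_prime (G : ℕ → Type*) [∀ i, Group (G i)]
    [∀ i, Countable (G i)] (htf : ∀ i, ∃ s : G i, ¬ IsOfFinOrder s)
    (X : Type*) [TopologicalSpace X] [CompactSpace X] [MetrizableSpace X]
    [TotallyDisconnectedSpace X] [PerfectSpace X] [Nonempty X]
    (α : Monoid.CoprodI G →* (X ≃ₜ X)) (hR : PropertyR α)
    (Y : Type*) [TopologicalSpace Y] [CompactSpace Y] [MetrizableSpace Y]
    (β : Monoid.CoprodI G →* (Y ≃ₜ Y)) (π : X → Y)
    (hcont : Continuous π) (hsurj : Function.Surjective π)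
    (hequiv : ∀ (s : Monoid.CoprodI G) (x : X), π (α s x) = β s (π x)) :
    Subsingleton Y ∨ Function.Injective π := by
  by_cases hinj : Function.Injective π
  · exact Or.inr hinj
  left
  rw [Function.not_injective_iff] at hinj
  obtain ⟨a, b, hab, hne⟩ := hinj
  -- Key lemma: for disjoint nonempty clopen A B, E meets A × B
  have keyAB : ∀ A B : Set X, IsClopen A → IsClopen B → A.Nonempty → B.Nonempty →
      Disjoint A B → ∃ x ∈ A, ∃ y ∈ B, π x = π y := by
    intro A B hA hB hAne hBne hABdisj
    -- A and B are infinite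
    have hAinf : A.Infinite := by
      obtain ⟨p, hp⟩ := hAne
      exact infinite_of_mem_nhds p (hA.2.mem_nhds hp)
    have hBinf : B.Infinite := by
      obtain ⟨q, hq⟩ := hBne
      exact infinite_of_mem_nhds q (hB.2.mem_nhds hq)
    obtain ⟨p, hpA, hpab⟩ := (hAinf.diff (Set.toFinite {a, b})).nonempty
    obtain ⟨q, hqB, hqab⟩ := (hBinf.diff (Set.toFinite {a, b, p})).nonempty
    simp only [Set.mem_insert_iff, Set.mem_singleton_iff, not_or] at hpab hqab
    -- clopen neighborhoods
    obtain ⟨Ca, hCa, haCa, hCasub⟩ := compact_exists_isClopen_in_isOpen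
      (U := ({b, p, q} : Set X)ᶜ) (by
        simp only [isOpen_compl_iff]
        exact Set.Finite.isClosed (Set.toFinite _))
      (by simp only [Set.mem_compl_iff, Set.mem_insert_iff, Set.mem_singleton_iff, not_or]
          exact ⟨hne, fun h => hpab.1 h.symm, fun h => hqab.1 h.symm⟩)
    have hb_mem : b ∈ ({b, p, q} : Set X) := by simp
    have hp_mem : p ∈ ({b, p, q} : Set X) := by simp
    have hq_mem : q ∈ ({b, p, q} : Set X) := by simp
    have hp_mem2 : p ∈ ({p, q} : Set X) := by simp
    have hq_mem2 : q ∈ ({p, q} : Set X) := by simp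
    obtain ⟨Cb, hCb, hbCb, hCbsub⟩ := compact_exists_isClopen_in_isOpen
      (U := Caᶜ ∩ ({p, q} : Set X)ᶜ)
      ((hCa.compl.2).inter (Set.Finite.isClosed (Set.toFinite _)).isOpen_compl)
      (by refine ⟨fun h => (hCasub h) hb_mem, ?_⟩
          simp only [Set.mem_compl_iff, Set.mem_insert_iff, Set.mem_singleton_iff, not_or]
          exact ⟨fun h => hpab.2 h.symm, fun h => hqab.2.1 h.symm⟩)
    obtain ⟨A', hA', hpA', hA'sub⟩ := compact_exists_isClopen_in_isOpen
      (U := A ∩ Caᶜ ∩ Cbᶜ ∩ ({q} : Set X)ᶜ)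
      (((hA.2.inter hCa.compl.2).inter hCb.compl.2).inter isClosed_singleton.isOpen_compl)
      (by refine ⟨⟨⟨hpA, fun h => (hCasub h) hp_mem⟩, fun h => (hCbsub h).2 hp_mem2⟩, ?_⟩
          simp only [Set.mem_compl_iff, Set.mem_singleton_iff]
          exact fun h => hqab.2.2 h.symm)
    obtain ⟨B', hB', hqB', hB'sub⟩ := compact_exists_isClopen_in_isOpen
      (U := B ∩ Caᶜ ∩ Cbᶜ ∩ A'ᶜ)
      (((hB.2.inter hCa.compl.2).inter hCb.compl.2).inter hA'.1.isOpen_compl)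
      (by refine ⟨⟨⟨hqB, fun h => (hCasub h) hq_mem⟩, fun h => (hCbsub h).2 hq_mem2⟩,
            fun h => (hA'sub h).2 rfl⟩)
    -- assemble the family
    set U : Fin 4 → Set X := ![Ca, A', Cb, B'] with hU
    have hclopen : ∀ i, IsClopen (U i) := by
      intro i; fin_cases i <;> simpa [hU] using ‹_›
    have hnonempty : ∀ i, (U i).Nonempty := by
      intro i; fin_cases i
      exacts [⟨a, haCa⟩, ⟨p, hpA'⟩, ⟨b, hbCb⟩, ⟨q, hqB'⟩]
    -- pairwise disjointness facts
    have dCaA' : Disjoint Ca A' := Set.disjoint_left.2 fun x hx hx' => (hA'sub hx').1.1.2 hx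
    have dCaCb : Disjoint Ca Cb := Set.disjoint_left.2 fun x hx hx' => (hCbsub hx').1 hx
    have dCaB' : Disjoint Ca B' := Set.disjoint_left.2 fun x hx hx' => (hB'sub hx').1.1.2 hx
    have dA'Cb : Disjoint A' Cb := Set.disjoint_left.2 fun x hx hx' => (hA'sub hx).1.2 hx'
    have dA'B' : Disjoint A' B' := Set.disjoint_left.2 fun x hx hx' => (hB'sub hx').2 hx
    have dCbB' : Disjoint Cb B' := Set.disjoint_left.2 fun x hx hx' => (hB'sub hx').1.2 hx
    have hproper : ∀ i, U i ≠ Set.univ := by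
      intro i hu
      fin_cases i
      · have h' : Ca = Set.univ := by simpa [hU] using hu
        exact Set.disjoint_left.1 dCaA' (h'.ge (Set.mem_univ p)) hpA'
      · have h' : A' = Set.univ := by simpa [hU] using hu
        exact Set.disjoint_left.1 dCaA'.symm (h'.ge (Set.mem_univ a)) haCa
      · have h' : Cb = Set.univ := by simpa [hU] using hu
        exact Set.disjoint_left.1 dCaCb.symm (h'.ge (Set.mem_univ a)) haCa
      · have h' : B' = Set.univ := by simpa [hU] using hu
        exact Set.disjoint_left.1 dCaB'.symm (h'.ge (Set.mem_univ a)) haCa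
    have hpw : Pairwise (Function.onFun Disjoint U) := by
      intro i j hij
      fin_cases i <;> fin_cases j <;>
        first
        | exact absurd rfl hij
        | simpa [hU, Function.onFun] using ‹_›
        | · simp only [hU, Function.onFun]
            first
            | exact dCaA' | exact dCaCb | exact dCaB' | exact dA'Cb | exact dA'B'
            | exact dCbB' | exact dCaA'.symm | exact dCaCb.symm | exact dCaB'.symm
            | exact dA'Cb.symm | exact dA'B'.symm | exact dCbB'.symm
    obtain ⟨i, hi⟩ := (hR 4 U hclopen hnonempty hproper hpw).nonempty
    obtain ⟨s, -, hmap⟩ := hi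
    refine ⟨α (Monoid.CoprodI.of s) a, ?_, α (Monoid.CoprodI.of s) b, ?_, ?_⟩
    · have h0 := hmap 0
      have : α (Monoid.CoprodI.of s) a ∈ α (Monoid.CoprodI.of s) '' U 0 :=
        Set.mem_image_of_mem _ (by simpa [hU] using haCa)
      rw [h0] at this
      have : α (Monoid.CoprodI.of s) a ∈ A' := by simpa [hU] using this
      exact (hA'sub this).1.1.1
    · have h2 := hmap 2
      have : α (Monoid.CoprodI.of s) b ∈ α (Monoid.CoprodI.of s) '' U 2 :=
        Set.mem_image_of_mem _ (by simpa [hU] using hbCb)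
      rw [h2] at this
      have : α (Monoid.CoprodI.of s) b ∈ B' := by simpa [hU] using this
      exact (hB'sub this).1.1.1
    · rw [hequiv, hequiv, hab]
  -- π is constant
  have hconst : ∀ p q : X, π p = π q := by
    intro p q
    rcases eq_or_ne p q with rfl | hpq
    · rfl
    have hE : IsClosed {z : X × X | π z.1 = π z.2} :=
      isClosed_eq (hcont.comp continuous_fst) (hcont.comp continuous_snd)
    have : (p, q) ∈ {z : X × X | π z.1 = π z.2} := by
      rw [← hE.closure_eq]
      rw [mem_closure_iff]
      intro O hO hpqO
      rw [isOpen_prod_iff] at hO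
      obtain ⟨V, W, hV, hW, hpV, hqW, hVWO⟩ := hO p q hpqO
      obtain ⟨V₀, W₀, hV₀, hW₀, hpV₀, hqW₀, hVW₀⟩ := t2_separation hpq
      obtain ⟨A, hA, hpA, hAsub⟩ := compact_exists_isClopen_in_isOpen
        (hV.inter hV₀) ⟨hpV, hpV₀⟩
      obtain ⟨B, hB, hqB, hBsub⟩ := compact_exists_isClopen_in_isOpen
        (hW.inter hW₀) ⟨hqW, hqW₀⟩
      obtain ⟨x, hx, y, hy, hxy⟩ := keyAB A B hA hB ⟨p, hpA⟩ ⟨q, hqB⟩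
        (hVW₀.mono (fun z hz => (hAsub hz).2) (fun z hz => (hBsub hz).2))
      exact ⟨(x, y), hVWO ⟨(hAsub hx).1, (hBsub hy).1⟩, hxy⟩
    exact this
  constructor
  intro y₁ y₂
  obtain ⟨x₁, rfl⟩ := hsurj y₁
  obtain ⟨x₂, rfl⟩ := hsurj y₂
  exact hconst x₁ x₂
end

section
/- Let Γ = ∗_{i∈ℕ} Γ_i be the free product of a countably infinite family of countable groups, each containing an element of infinite order, and let α ∈ S(Γ,X) be an action on the Cantor set X satisfying property R. Then every nonzero closed Γ-invariant linear subspace of the Banach space C(X,ℂ) (with the supremum norm, Γ acting by f ↦ f ∘ α_{s⁻¹}) contains the constant functions. -/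
/-! Pick `f ∈ V` and `x₀` with `f x₀ ≠ 0`. Cut `X` into clopen pieces on which `f` oscillates
by less than `ε`, then split the piece containing `x₀` so finely that the pieces near `x₀`
outnumber the others as much as we like. Property R provides `s` permuting these `n` pieces
cyclically, so the average `(1/n) ∑_{t<n} s^t · f ∈ V` is `ε`-close to the mean of `f` over
one point from each piece, and that mean is `2ε`-close to `f x₀`. Hence the constant `f x₀`
lies in the closed subspace `V`. -/

open TopologicalSpace

open Set Function

section ClopenPartition

variable {X ι κ : Type*} [TopologicalSpace X]

structure IsClopenPartition (U : ι → Set X) (A : Set X) : Prop where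
  isClopen : ∀ i, IsClopen (U i)
  nonempty : ∀ i, (U i).Nonempty
  pairwise_disjoint : Pairwise (Disjoint on U)
  iUnion_eq : ⋃ i, U i = A

namespace IsClopenPartition

variable {U : ι → Set X} {A : Set X}

lemma subset (hU : IsClopenPartition U A) (i : ι) : U i ⊆ A :=
  hU.iUnion_eq ▸ subset_iUnion U i

lemma exists_mem (hU : IsClopenPartition U A) {x : X} (hx : x ∈ A) : ∃ i, x ∈ U i :=
  mem_iUnion.mp (hU.iUnion_eq ▸ hx)

lemma ne_univ [Nontrivial ι] (hU : IsClopenPartition U A) (i : ι) : U i ≠ univ := by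
  obtain ⟨j, hji⟩ := exists_ne i
  obtain ⟨x, hx⟩ := hU.nonempty j
  intro h
  exact (hU.pairwise_disjoint hji).ne_of_mem hx (h ▸ mem_univ x) rfl

lemma comp_equiv (hU : IsClopenPartition U A) (e : κ ≃ ι) : IsClopenPartition (U ∘ e) A where
  isClopen i := hU.isClopen (e i)
  nonempty i := hU.nonempty (e i)
  pairwise_disjoint := hU.pairwise_disjoint.comp_of_injective e.injective
  iUnion_eq := by rw [← hU.iUnion_eq]; exact e.surjective.iUnion_comp U

lemma of_unique [Unique ι] (hA : IsClopen A) (hne : A.Nonempty) :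
    IsClopenPartition (fun _ : ι ↦ A) A where
  isClopen _ := hA
  nonempty _ := hne
  pairwise_disjoint i j hij := (hij (Subsingleton.elim i j)).elim
  iUnion_eq := iUnion_const A

lemma sumElim {W : κ → Set X} {B : Set X} (hU : IsClopenPartition U A)
    (hW : IsClopenPartition W B) (hAB : Disjoint A B) :
    IsClopenPartition (Sum.elim U W) (A ∪ B) where
  isClopen := Sum.forall.2 ⟨hU.isClopen, hW.isClopen⟩
  nonempty := Sum.forall.2 ⟨hU.nonempty, hW.nonempty⟩
  pairwise_disjoint := by
    rintro (i | k) (j | l) h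
    · exact hU.pairwise_disjoint (ne_of_apply_ne Sum.inl h)
    · exact hAB.mono (hU.subset i) (hW.subset l)
    · exact (hAB.mono (hU.subset j) (hW.subset k)).symm
    · exact hW.pairwise_disjoint (ne_of_apply_ne Sum.inr h)
  iUnion_eq := by rw [iUnion_sum, ← hU.iUnion_eq, ← hW.iUnion_eq]; rfl

lemma compl (hU : IsClopenPartition U univ) (j : ι) :
    IsClopenPartition (fun i : {i // i ≠ j} ↦ U i) (U j)ᶜ where
  isClopen i := hU.isClopen i
  nonempty i := hU.nonempty i
  pairwise_disjoint i i' h := hU.pairwise_disjoint (Subtype.coe_injective.ne h)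
  iUnion_eq := by
    ext x
    simp only [mem_iUnion, mem_compl_iff, Subtype.exists]
    constructor
    · rintro ⟨i, hij, hx⟩ hxj
      exact (hU.pairwise_disjoint hij).ne_of_mem hx hxj rfl
    · intro hxj
      obtain ⟨i, hx⟩ := hU.exists_mem (mem_univ x)
      exact ⟨i, fun h ↦ hxj (h ▸ hx), hx⟩

end IsClopenPartition

end ClopenPartition

section Profinite

variable {X : Type*} [TopologicalSpace X] [CompactSpace X] [T2Space X]
  [TotallyDisconnectedSpace X]

lemma IsOpen.exists_isClopen_ssubset [PerfectSpace X] {A : Set X} (hA : IsOpen A)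
    (hne : A.Nonempty) : ∃ B, IsClopen B ∧ B.Nonempty ∧ B ⊂ A := by
  obtain ⟨x, hx⟩ := hne
  obtain ⟨y, ⟨hyA, -⟩, hyx⟩ :=
    preperfect_iff_nhds.mp PerfectSpace.univ_preperfect x (mem_univ x) A (hA.mem_nhds hx)
  obtain ⟨B, hB, hyB, hBA⟩ := compact_exists_isClopen_in_isOpen (hA.sdiff isClosed_singleton)
    (mem_sdiff_singleton.2 ⟨hyA, hyx⟩)
  exact ⟨B, hB, ⟨y, hyB⟩, ssubset_of_subset_not_subset (hBA.trans sdiff_subset)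
    fun h ↦ (hBA (h hx)).2 rfl⟩

lemma exists_isClopenPartition_fin [PerfectSpace X] (m : ℕ) {A : Set X} (hA : IsClopen A)
    (hne : A.Nonempty) : ∃ W : Fin (m + 1) → Set X, IsClopenPartition W A := by
  induction m generalizing A with
  | zero => exact ⟨_, .of_unique (ι := Fin 1) hA hne⟩
  | succ m ih =>
    obtain ⟨B, hB, hBne, hBA⟩ := hA.isOpen.exists_isClopen_ssubset hne
    obtain ⟨W, hW⟩ := ih (hA.diff hB) (nonempty_of_ssubset hBA)
    have hWB :=
      hW.sumElim (IsClopenPartition.of_unique (ι := Fin 1) hB hBne) disjoint_sdiff_left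
    rw [sdiff_union_of_subset hBA.subset] at hWB
    exact ⟨_, hWB.comp_equiv finSumFinEquiv.symm⟩

lemma ContinuousMap.exists_isClopenPartition_dist_lt {E : Type*} [PseudoMetricSpace E]
    (f : C(X, E)) {ε : ℝ} (hε : 0 < ε) :
    ∃ (n : ℕ) (D : Fin n → Set X), IsClopenPartition D univ ∧
      ∀ i, ∀ y ∈ D i, ∀ z ∈ D i, dist (f y) (f z) < ε := by
  obtain ⟨n, D, hne, hD, hcover, hdisj⟩ :=
    f.exists_disjoint_nonempty_clopen_cover_of_mem_nhds_diagonal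
      (nhdsSet_diagonal_le_uniformity (Metric.dist_mem_uniformity hε))
  refine ⟨n, fun i ↦ D i, ⟨fun i ↦ (D i).isClopen, fun i ↦ ?_, fun i j h ↦ ?_,
    univ_subset_iff.mp hcover⟩, hD⟩
  · exact nonempty_iff_ne_empty.2 fun h ↦ hne i (SetLike.coe_injective h)
  · exact Clopens.coe_disjoint.2 (hdisj h)

lemma exists_isClopenPartition_clustered [PerfectSpace X] {E : Type*} [PseudoMetricSpace E]
    (f : C(X, E)) (x₀ : X) {ε : ℝ} (hε : 0 < ε) :
    ∃ (κ : Type) (_ : Fintype κ), ∀ m : ℕ, ∃ U : Fin (m + 2) ⊕ κ → Set X,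
      IsClopenPartition U univ ∧ (∀ i, ∀ y ∈ U i, ∀ z ∈ U i, dist (f y) (f z) < ε) ∧
      ∀ a, ∀ y ∈ U (.inl a), dist (f y) (f x₀) < ε := by
  obtain ⟨n, D, hD, hosc⟩ := f.exists_isClopenPartition_dist_lt hε
  obtain ⟨j₀, hj₀⟩ := hD.exists_mem (mem_univ x₀)
  refine ⟨{j // j ≠ j₀}, inferInstance, fun m ↦ ?_⟩
  obtain ⟨W, hW⟩ := exists_isClopenPartition_fin (m + 1) (hD.isClopen j₀) (hD.nonempty j₀)
  have hU := hW.sumElim (hD.compl j₀) disjoint_compl_right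
  rw [union_compl_self] at hU
  refine ⟨_, hU, ?_, fun a y hy ↦ hosc j₀ y (hW.subset a hy) x₀ hj₀⟩
  rintro (a | j) y hy z hz
  · exact hosc j₀ y (hW.subset a hy) z (hW.subset a hz)
  · exact hosc j y hy z hz

end Profinite

section Average

variable {ι κ E : Type*} [Fintype ι] [Fintype κ] [SeminormedAddCommGroup E] [NormedSpace ℝ E]

lemma dist_average_le_average_dist (a b : ι → E) :
    dist ((Fintype.card ι : ℝ)⁻¹ • ∑ i, a i) ((Fintype.card ι : ℝ)⁻¹ • ∑ i, b i) ≤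
      (Fintype.card ι : ℝ)⁻¹ * ∑ i, dist (a i) (b i) := by
  rw [dist_smul₀, Real.norm_of_nonneg (by positivity)]
  gcongr
  exact dist_sum_sum_le _ _ _

lemma dist_average_sum_le [Nonempty ι] {a : ι ⊕ κ → E} {c : E} {ε B : ℝ}
    (hι : ∀ i, dist (a (.inl i)) c ≤ ε) (hκ : ∀ k, dist (a (.inr k)) c ≤ B)
    (hB : Fintype.card κ * B ≤ Fintype.card ι * ε) :
    dist ((Fintype.card (ι ⊕ κ) : ℝ)⁻¹ • ∑ i, a i) c ≤ 2 * ε := by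
  have hε : 0 ≤ ε := dist_nonneg.trans (hι (Classical.arbitrary ι))
  have hN : (0 : ℝ) < Fintype.card (ι ⊕ κ) := by exact_mod_cast Fintype.card_pos
  have hc : (Fintype.card (ι ⊕ κ) : ℝ)⁻¹ • ∑ _i : ι ⊕ κ, c = c := by
    rw [Finset.sum_const, Finset.card_univ, ← Nat.cast_smul_eq_nsmul ℝ, smul_smul,
      inv_mul_cancel₀ hN.ne', one_smul]
  calc dist ((Fintype.card (ι ⊕ κ) : ℝ)⁻¹ • ∑ i, a i) c
      ≤ (Fintype.card (ι ⊕ κ) : ℝ)⁻¹ * ∑ i, dist (a i) c := by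
        conv_lhs => rw [← hc]
        exact dist_average_le_average_dist _ _
    _ ≤ (Fintype.card (ι ⊕ κ) : ℝ)⁻¹ * (Fintype.card ι * ε + Fintype.card κ * B) := by
        rw [Fintype.sum_sum_type]
        gcongr
        · exact (Finset.sum_le_card_nsmul _ _ _ fun i _ ↦ hι i).trans_eq (by simp)
        · exact (Finset.sum_le_card_nsmul _ _ _ fun k _ ↦ hκ k).trans_eq (by simp)
    _ ≤ 2 * ε := by
        rw [inv_mul_le_iff₀ hN, Fintype.card_sum]
        push_cast
        nlinarith

end Average

section Cyclic

open Fin.NatCast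

variable {X E : Type*} [TopologicalSpace X] [SeminormedAddCommGroup E] [NormedSpace ℝ E]
  {n : ℕ} [NeZero n] {σ : X ≃ₜ X} {U : Fin n → Set X}

lemma inv_pow_apply_mem (hσ : ∀ j, σ '' U j = U (j + 1)) (t : ℕ) {j : Fin n} {x : X}
    (hx : x ∈ U j) : (σ ^ t)⁻¹ x ∈ U (j - t) := by
  induction t generalizing x with
  | zero => simpa using hx
  | succ t ih =>
    obtain ⟨y, hy, hyx⟩ : (σ ^ t)⁻¹ x ∈ σ '' U (j - t - 1) := by
      rw [hσ, sub_add_cancel]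
      exact ih hx
    have hy' : σ⁻¹ ((σ ^ t)⁻¹ x) = y := by rw [← hyx]; exact σ.symm_apply_apply y
    rw [pow_succ, mul_inv_rev, Nat.cast_succ, ← sub_sub]
    -- `(σ⁻¹ * (σ ^ t)⁻¹) x` is `σ⁻¹ ((σ ^ t)⁻¹ x)` by definition of `homeoGroup`
    exact hy' ▸ hy

lemma dist_average_inv_pow_le (hσ : ∀ j, σ '' U j = U (j + 1)) (hU : ⋃ j, U j = univ)
    {f : X → E} {p : Fin n → X} {ε : ℝ} (hf : ∀ j, ∀ y ∈ U j, dist (f y) (f (p j)) ≤ ε)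
    (x : X) :
    dist ((n : ℝ)⁻¹ • ∑ t : Fin n, f ((σ ^ (t : ℕ))⁻¹ x)) ((n : ℝ)⁻¹ • ∑ j, f (p j)) ≤ ε := by
  obtain ⟨j, hx⟩ := mem_iUnion.mp (hU ▸ mem_univ x)
  rw [← (Equiv.subLeft j).sum_comp (fun i ↦ f (p i))]
  have h := dist_average_le_average_dist (fun t : Fin n ↦ f ((σ ^ (t : ℕ))⁻¹ x))
    (fun t ↦ f (p (j - t)))
  rw [Fintype.card_fin] at h
  refine h.trans ?_
  rw [inv_mul_le_iff₀ (Nat.cast_pos.2 (NeZero.pos n))]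
  calc ∑ t : Fin n, dist (f ((σ ^ (t : ℕ))⁻¹ x)) (f (p (j - t)))
      ≤ ∑ _t : Fin n, ε := Finset.sum_le_sum fun t _ ↦ by
        simpa using hf _ _ (inv_pow_apply_mem hσ t hx)
    _ = n * ε := by simp

end Cyclic

namespace PropertyR

variable {G : ℕ → Type*} [∀ i, Group (G i)] {X : Type*} [TopologicalSpace X] [CompactSpace X]
  {α : Monoid.CoprodI G →* (X ≃ₜ X)} {V : Submodule ℂ C(X, ℂ)} {f : C(X, ℂ)}

lemma exists_mem_dist_const_le (hR : PropertyR α)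
    (hinv : ∀ (s : Monoid.CoprodI G), ∀ f ∈ V, f.comp ((α s⁻¹ : X ≃ₜ X) : C(X, X)) ∈ V)
    (hf : f ∈ V) {ι : Type*} [Fintype ι] [Nontrivial ι] {U : ι → Set X}
    (hU : IsClopenPartition U univ) {p : ι → X} {ε : ℝ} (hε : 0 ≤ ε)
    (hosc : ∀ i, ∀ y ∈ U i, dist (f y) (f (p i)) ≤ ε) :
    ∃ g ∈ V, dist g (ContinuousMap.const X ((Fintype.card ι : ℝ)⁻¹ • ∑ i, f (p i))) ≤ ε := by
  set N := Fintype.card ι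
  have : NeZero N := ⟨Fintype.card_ne_zero⟩
  let e := (Fintype.equivFin ι).symm
  have : Nontrivial (Fin N) := e.nontrivial
  have hUe := hU.comp_equiv e
  obtain ⟨_, s, -, hs⟩ :=
    (hR N (U ∘ e) hUe.isClopen hUe.nonempty hUe.ne_univ hUe.pairwise_disjoint).nonempty
  let w := Monoid.CoprodI.of s
  refine ⟨(N : ℝ)⁻¹ • ∑ t : Fin N, f.comp ((α (w ^ (t : ℕ))⁻¹ : X ≃ₜ X) : C(X, X)),
    V.smul_of_tower_mem _ (V.sum_mem fun t _ ↦ hinv _ f hf),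
    (ContinuousMap.dist_le hε).2 fun x ↦ ?_⟩
  have h := dist_average_inv_pow_le hs hUe.iUnion_eq (fun j ↦ hosc (e j)) x
  rw [e.sum_comp (fun i ↦ f (p i))] at h
  simpa [w, map_inv, map_pow] using h

lemma const_mem_closure [T2Space X] [TotallyDisconnectedSpace X] [PerfectSpace X]
    (hR : PropertyR α)
    (hinv : ∀ (s : Monoid.CoprodI G), ∀ f ∈ V, f.comp ((α s⁻¹ : X ≃ₜ X) : C(X, X)) ∈ V)
    (hf : f ∈ V) (x₀ : X) :
    ContinuousMap.const X (f x₀) ∈ closure (V : Set C(X, ℂ)) := by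
  refine Metric.mem_closure_iff.2 fun r hr ↦ ?_
  obtain ⟨ε, hε, hεr⟩ : ∃ ε, 0 < ε ∧ 3 * ε < r := ⟨r / 4, by positivity, by linarith⟩
  obtain ⟨κ, _, hpartition⟩ := exists_isClopenPartition_clustered f x₀ hε
  obtain ⟨B, hB⟩ := Metric.isBounded_iff.1 (isCompact_range f.continuous).isBounded
  obtain ⟨m, hm⟩ := exists_nat_ge (Fintype.card κ * B / ε)
  obtain ⟨U, hU, hosc, hnear⟩ := hpartition m
  choose p hp using hU.nonempty
  have : Nontrivial (Fin (m + 2) ⊕ κ) := Sum.inl_injective.nontrivial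
  set μ := (Fintype.card (Fin (m + 2) ⊕ κ) : ℝ)⁻¹ • ∑ i, f (p i)
  obtain ⟨g, hgV, hg⟩ :=
    hR.exists_mem_dist_const_le hinv hf hU hε.le fun i y hy ↦ (hosc i y hy (p i) (hp i)).le
  have hμ : dist μ (f x₀) ≤ 2 * ε :=
    dist_average_sum_le (fun a ↦ (hnear a _ (hp _)).le)
      (fun k ↦ hB (mem_range_self _) (mem_range_self _)) (by
        rw [div_le_iff₀ hε] at hm
        rw [Fintype.card_fin]
        push_cast
        nlinarith)
  refine ⟨g, hgV, lt_of_le_of_lt ?_ hεr⟩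
  rw [dist_comm]
  refine (ContinuousMap.dist_le (by positivity)).2 fun x ↦ ?_
  calc dist (g x) (f x₀) ≤ dist (g x) μ + dist μ (f x₀) := dist_triangle _ _ _
    _ ≤ ε + 2 * ε := add_le_add ((ContinuousMap.dist_apply_le_dist x).trans hg) hμ
    _ = 3 * ε := by ring

end PropertyR

theorem invariant_subspace_contains_constants_general (G : ℕ → Type*) [∀ i, Group (G i)]
    (X : Type*) [TopologicalSpace X] [CompactSpace X] [MetrizableSpace X]
    [TotallyDisconnectedSpace X] [PerfectSpace X]
    (α : Monoid.CoprodI G →* (X ≃ₜ X)) (hR : PropertyR α)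
    (V : Submodule ℂ C(X, ℂ)) (hV : V ≠ ⊥) (hclosed : IsClosed (V : Set C(X, ℂ)))
    (hinv : ∀ (s : Monoid.CoprodI G), ∀ f ∈ V, f.comp ((α s⁻¹ : X ≃ₜ X) : C(X, X)) ∈ V) :
    ∀ c : ℂ, (ContinuousMap.const X c) ∈ V := by
  obtain ⟨f, hfV, hf0⟩ := Submodule.exists_mem_ne_zero_of_ne_bot hV
  obtain ⟨x₀, hx₀⟩ : ∃ x, f x ≠ 0 := by
    by_contra! h
    exact hf0 (ContinuousMap.ext h)
  have hconst : ContinuousMap.const X (f x₀) ∈ V :=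
    hclosed.closure_subset (hR.const_mem_closure hinv hfV x₀)
  intro c
  convert V.smul_mem (c / f x₀) hconst using 1
  ext
  simp [div_mul_cancel₀ _ hx₀]

/-- Let `Γ = ∗_{i∈ℕ} G i` be the free product of countably many countable groups,
each containing an element of infinite order, and let `α` be a Cantor system of `Γ`
with property `R`. Then every nonzero closed `Γ`-invariant linear subspace of the
Banach space `C(X, ℂ)` (sup norm, `Γ` acting by `s·f = f ∘ α_{s⁻¹}`) contains all
constant functions. -/
theorem invariant_subspace_contains_constants (G : ℕ → Type*) [∀ i, Group (G i)]
    [∀ i, Countable (G i)] (htf : ∀ i, ∃ s : G i, ¬ IsOfFinOrder s)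
    (X : Type*) [TopologicalSpace X] [CompactSpace X] [MetrizableSpace X]
    [TotallyDisconnectedSpace X] [PerfectSpace X] [Nonempty X]
    (α : Monoid.CoprodI G →* (X ≃ₜ X)) (hR : PropertyR α)
    (V : Submodule ℂ C(X, ℂ)) (hV : V ≠ ⊥) (hclosed : IsClosed (V : Set C(X, ℂ)))
    (hinv : ∀ (s : Monoid.CoprodI G), ∀ f ∈ V, f.comp ((α s⁻¹ : X ≃ₜ X) : C(X, X)) ∈ V) :
    ∀ c : ℂ, (ContinuousMap.const X c) ∈ V :=
  invariant_subspace_contains_constants_general G X α hR V hV hclosed hinv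
end

section
/- Let Γ = ∗_{i∈ℕ} Γ_i be the free product of a countably infinite family of countable groups, each containing an element of infinite order, and let α ∈ S(Γ,X) be an action on the Cantor set X satisfying property R. Then α is a boundary in Furstenberg's sense: for every Borel probability measure ν on X and every point x ∈ X, the Dirac measure δ_x lies in the weak* closure of the orbit {(α_s)_*ν : s ∈ Γ} in the space of Borel probability measures on X. -/
/-!
Let `V` be a proper nonempty clopen set. Property `R`, applied to `V` together with `n`
disjoint nonempty clopen pieces of `Vᶜ`, gives a homeomorphism `α s` permuting the `n + 1`
pieces cyclically. One piece has `ν`-measure at most `1 / (n + 1)`, and a power of `α s`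
carries it onto `V`, so some translate of `ν` gives `V` measure at most `1 / (n + 1)`.
Taking for `V` the complements of a decreasing clopen neighbourhood basis of `x` yields
translates of `ν` concentrating at `x`; by the portmanteau theorem they converge to `δ_x`.
-/

open TopologicalSpace

open MeasureTheory

open scoped Fin.NatCast ENNReal
open Filter Function Topology Set

lemma pairwise_disjoint_fin_cons {α : Type*} [PartialOrder α] [OrderBot α] {n : ℕ} {V : α}
    {U : Fin n → α} (hV : ∀ j, Disjoint V (U j)) (hU : Pairwise (Disjoint on U)) :
    Pairwise (Disjoint on (Fin.cons V U : Fin (n + 1) → α)) := by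
  intro i j hij
  cases i using Fin.cases <;> cases j using Fin.cases
  · exact absurd rfl hij
  · exact hV _
  · exact (hV _).symm
  · exact hU (fun h => hij (congrArg Fin.succ h))

section Clopen

variable {X : Type*} [TopologicalSpace X] [T2Space X] [CompactSpace X] [TotallyDisconnectedSpace X]
  [PerfectSpace X]

lemma exists_pairwise_disjoint_clopen_subsets {W : Set X} (hW : IsOpen W) (hne : W.Nonempty)
    (n : ℕ) : ∃ U : Fin n → Set X,
      (∀ i, IsClopen (U i) ∧ (U i).Nonempty ∧ U i ⊆ W) ∧ Pairwise (Disjoint on U) := by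
  induction n generalizing W with
  | zero => exact ⟨finZeroElim, finZeroElim, finZeroElim⟩
  | succ n ih =>
    obtain ⟨y, hy⟩ := hne
    obtain ⟨z, ⟨-, hz⟩, hzy⟩ := accPt_iff_nhds.mp (hW.preperfect y hy) univ univ_mem
    obtain ⟨C, hC, hyC, hCW⟩ :=
      compact_exists_isClopen_in_isOpen (hW.inter isOpen_compl_singleton) ⟨hy, hzy.symm⟩
    obtain ⟨U, hU, hUd⟩ := ih (hW.inter hC.isClosed.isOpen_compl)
      ⟨z, hz, fun hzC => (hCW hzC).2 rfl⟩
    refine ⟨Fin.cons C U, Fin.forall_fin_succ.mpr ⟨?_, fun i => ?_⟩,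
      pairwise_disjoint_fin_cons (fun i => ?_) hUd⟩
    · exact ⟨hC, ⟨y, hyC⟩, fun _ h => (hCW h).1⟩
    · exact ⟨(hU i).1, (hU i).2.1, (hU i).2.2.trans inter_subset_left⟩
    · exact disjoint_compl_right.mono_right ((hU i).2.2.trans inter_subset_right)

end Clopen

section Cyclic

variable {X : Type*} [TopologicalSpace X] {m : ℕ} [NeZero m] (φ : X ≃ₜ X) {F : Fin m → Set X}

lemma image_pow_of_image_eq_succ (hφ : ∀ j, φ '' F j = F (j + 1)) (k : ℕ) (j : Fin m) :
    ⇑(φ ^ k) '' F j = F (j + k) := by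
  induction k generalizing j with
  | zero => rw [pow_zero, Nat.cast_zero, add_zero]; exact image_id _
  | succ k ih =>
    have hcoe : ⇑(φ ^ (k + 1)) = ⇑(φ ^ k) ∘ ⇑φ := by rw [pow_succ]; rfl
    rw [hcoe, image_comp, hφ, ih, Nat.cast_succ, add_right_comm, add_assoc]

lemma exists_pow_image_eq_of_image_eq_succ (hφ : ∀ j, φ '' F j = F (j + 1)) (i j : Fin m) :
    ∃ k : ℕ, ⇑(φ ^ k) '' F i = F j :=
  ⟨(j - i).val, by rw [image_pow_of_image_eq_succ φ hφ, Fin.cast_val_eq_self, add_sub_cancel]⟩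

end Cyclic

section Measure

variable {X : Type*} [MeasurableSpace X]

lemma exists_measure_le_inv_card {ι : Type*} [Fintype ι] [Nonempty ι] (μ : Measure X)
    [IsProbabilityMeasure μ] {F : ι → Set X} (hF : ∀ i, MeasurableSet (F i))
    (hd : Pairwise (Disjoint on F)) : ∃ i, μ (F i) ≤ (Fintype.card ι : ℝ≥0∞)⁻¹ := by
  have hsum : ∑ i, μ (F i) ≤ ∑ _i : ι, (Fintype.card ι : ℝ≥0∞)⁻¹ :=
    calc ∑ i, μ (F i) = μ (⋃ i, F i) := by rw [measure_iUnion hd hF, tsum_fintype]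
      _ ≤ 1 := prob_le_one
      _ = ∑ _i : ι, (Fintype.card ι : ℝ≥0∞)⁻¹ := by
        rw [Finset.sum_const, Finset.card_univ, nsmul_eq_mul,
          ENNReal.mul_inv_cancel (by simp) (by simp)]
  obtain ⟨i, -, hi⟩ := ENNReal.exists_le_of_sum_le Finset.univ_nonempty hsum
  exact ⟨i, hi⟩

lemma exists_measure_preimage_pow_le [TopologicalSpace X] {m : ℕ} [NeZero m] (μ : Measure X)
    [IsProbabilityMeasure μ] (φ : X ≃ₜ X) {F : Fin m → Set X} (hF : ∀ i, MeasurableSet (F i))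
    (hd : Pairwise (Disjoint on F)) (hφ : ∀ j, φ '' F j = F (j + 1)) (i : Fin m) :
    ∃ k : ℕ, μ (⇑(φ ^ k) ⁻¹' F i) ≤ (m : ℝ≥0∞)⁻¹ := by
  obtain ⟨j, hj⟩ := exists_measure_le_inv_card μ hF hd
  obtain ⟨k, hk⟩ := exists_pow_image_eq_of_image_eq_succ φ hφ j i
  refine ⟨k, ?_⟩
  rwa [← hk, Homeomorph.preimage_image, ← Fintype.card_fin m]

lemma tendsto_diracProba_of_tendsto_measure_compl [TopologicalSpace X] [OpensMeasurableSpace X]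
    {ι : Type*} {L : Filter ι} [L.IsCountablyGenerated] [L.NeBot]
    {μs : ι → ProbabilityMeasure X} {x : X}
    (h : ∀ U ∈ 𝓝 x, Tendsto (fun i => (μs i : Measure X) Uᶜ) L (𝓝 0)) :
    Tendsto μs L (𝓝 (diracProba x)) := by
  refine tendsto_of_forall_isOpen_le_liminf' fun U hU => ?_
  by_cases hx : x ∈ U
  · have hone : Tendsto (fun i => (μs i : Measure X) U) L (𝓝 1) := by
      have := ENNReal.Tendsto.sub tendsto_const_nhds (h U (hU.mem_nhds hx))
        (.inl ENNReal.one_ne_top)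
      simpa [← prob_compl_eq_one_sub hU.measurableSet.compl] using this
    rw [hone.liminf_eq, diracProba_toMeasure_apply_of_mem hx]
  · simp [diracProba_toMeasure_apply' x hU.measurableSet, hx]

end Measure

lemma PropertyR.exists_measure_preimage_le {G : ℕ → Type*} [∀ i, Group (G i)] {X : Type*}
    [TopologicalSpace X] [T2Space X] [CompactSpace X] [TotallyDisconnectedSpace X]
    [PerfectSpace X] [MeasurableSpace X] [OpensMeasurableSpace X]
    {α : Monoid.CoprodI G →* (X ≃ₜ X)} (hR : PropertyR α) (μ : Measure X)
    [IsProbabilityMeasure μ] {V : Set X} (hV : IsClopen V) (hVc : Vᶜ.Nonempty) (n : ℕ) :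
    ∃ s, μ (α s ⁻¹' V) ≤ ((n + 1 : ℕ) : ℝ≥0∞)⁻¹ := by
  rcases V.eq_empty_or_nonempty with rfl | hVne
  · exact ⟨1, by simp⟩
  obtain ⟨U, hU, hUd⟩ := exists_pairwise_disjoint_clopen_subsets hV.isClosed.isOpen_compl hVc n
  have hVU : ∀ j, Disjoint V (U j) := fun j => disjoint_compl_right.mono_right (hU j).2.2
  set F : Fin (n + 1) → Set X := Fin.cons V U
  have hF : ∀ j, IsClopen (F j) ∧ (F j).Nonempty ∧ F j ≠ univ := Fin.forall_fin_succ.mpr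
    ⟨⟨hV, hVne, nonempty_compl.mp hVc⟩, fun j => ⟨(hU j).1, (hU j).2.1,
      fun h : U j = univ => hVne.ne_empty (disjoint_univ.mp (h ▸ hVU j))⟩⟩
  obtain ⟨i, s, -, hs⟩ := (hR (n + 1) F (fun j => (hF j).1) (fun j => (hF j).2.1)
    (fun j => (hF j).2.2) (pairwise_disjoint_fin_cons hVU hUd)).nonempty
  obtain ⟨k, hk⟩ := exists_measure_preimage_pow_le μ (α (Monoid.CoprodI.of s))
    (fun j => (hF j).1.isOpen.measurableSet) (pairwise_disjoint_fin_cons hVU hUd) hs 0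
  exact ⟨Monoid.CoprodI.of s ^ k, by rwa [map_pow]⟩

theorem propertyR_implies_boundary_general (G : ℕ → Type*) [∀ i, Group (G i)]
    (X : Type*) [TopologicalSpace X] [CompactSpace X] [MetrizableSpace X]
    [TotallyDisconnectedSpace X] [PerfectSpace X]
    [MeasurableSpace X] [BorelSpace X]
    (α : Monoid.CoprodI G →* (X ≃ₜ X)) (hR : PropertyR α)
    (ν : ProbabilityMeasure X) (x : X) :
    (⟨Measure.dirac x, Measure.dirac.isProbabilityMeasure⟩ : ProbabilityMeasure X) ∈
      closure {m : ProbabilityMeasure X | ∃ s : Monoid.CoprodI G,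
        m = ν.map (f := α s) (α s).continuous.measurable.aemeasurable} := by
  obtain ⟨W, hWx, hW⟩ := (nhds_basis_clopen x).exists_antitone_subbasis
  choose s hs using fun n =>
    hR.exists_measure_preimage_le (ν : Measure X) (hWx n).2.compl ⟨x, by simpa using (hWx n).1⟩ n
  change diracProba x ∈ _
  refine mem_closure_of_tendsto
    (tendsto_diracProba_of_tendsto_measure_compl (L := atTop) fun U hU => ?_)
    (Eventually.of_forall fun n => ⟨s n, rfl⟩)
  refine tendsto_of_tendsto_of_tendsto_of_le_of_le' tendsto_const_nhds
    (ENNReal.tendsto_inv_nat_nhds_zero.comp (tendsto_add_atTop_nat 1))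
    (Eventually.of_forall fun _ => zero_le) ?_
  filter_upwards [hW.eventually_subset hU] with n hWU
  calc _ ≤ (ν.map (α (s n)).continuous.measurable.aemeasurable : Measure X) (W n)ᶜ :=
        measure_mono (compl_subset_compl.mpr hWU)
    _ ≤ ((n + 1 : ℕ) : ℝ≥0∞)⁻¹ := by
        rw [ProbabilityMeasure.toMeasure_map,
          Measure.map_apply (α (s n)).continuous.measurable (hWx n).2.compl.isOpen.measurableSet]
        exact hs n

/-- Let `Γ = ∗_{i∈ℕ} G i` be the free product of countably many countable groups,
each containing an element of infinite order, and let `α` be a Cantor system of `Γ`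
with property `R`. Then `α` is a boundary in Furstenberg's sense: for every Borel
probability measure `ν` on `X` and every `x ∈ X`, the Dirac measure `δ_x` lies in
the weak* closure of the orbit `{(α_s)_* ν : s ∈ Γ}`. -/
theorem propertyR_implies_boundary (G : ℕ → Type*) [∀ i, Group (G i)]
    [∀ i, Countable (G i)] (htf : ∀ i, ∃ s : G i, ¬ IsOfFinOrder s)
    (X : Type*) [TopologicalSpace X] [CompactSpace X] [MetrizableSpace X]
    [TotallyDisconnectedSpace X] [PerfectSpace X] [Nonempty X]
    [MeasurableSpace X] [BorelSpace X]
    (α : Monoid.CoprodI G →* (X ≃ₜ X)) (hR : PropertyR α)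
    (ν : ProbabilityMeasure X) (x : X) :
    (⟨Measure.dirac x, Measure.dirac.isProbabilityMeasure⟩ : ProbabilityMeasure X) ∈
      closure {m : ProbabilityMeasure X | ∃ s : Monoid.CoprodI G,
        m = ν.map (f := α s) (α s).continuous.measurable.aemeasurable} :=
  propertyR_implies_boundary_general G X α hR ν x
end

section
/- Let Λ₁ and Λ₂ be groups and Λ := Λ₁ ∗ Λ₂ their free product. Let s ∈ Λ₁ and t ∈ Λ₂ be elements of infinite order. Then for any finite subset F of Λ∖{e}, there exist a partition Λ = D ⊔ E and elements u₁, u₂, u₃ of the subgroup of Λ generated by s and t such that (1) fD ∩ D = ∅ for all f ∈ F, and (2) u_j E ∩ u_k E = ∅ for any two distinct j, k ∈ {1,2,3}. -/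
/-!
Let `Λ₁ ∗ Λ₂` act on its reduced words and let `X` be the set of words whose first letter lies
in `Λ₁`. For all but finitely many `n`, the conjugate `tⁿ f t⁻ⁿ` of every `f ∈ F` is a reduced
word beginning and ending in `Λ₂`, so it maps `X` into its complement. A nontrivial element of
`Λ₁` maps the complement of `X` into `X`, so `sʲ Xᶜ` and `sᵏ Xᶜ` are disjoint for `j ≠ k`.
Hence `D`, the pull-back of `t⁻ⁿ X` along an orbit map, works with `uⱼ = t⁻ⁿ sʲ tⁿ`.
-/

open Filter Set Pointwise Monoid

theorem eventually_pow_ne {G : Type*} [LeftCancelMonoid G] {t : G} (ht : ¬IsOfFinOrder t)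
    (a : G) : ∀ᶠ n : ℕ in cofinite, t ^ n ≠ a :=
  (injective_pow_iff_not_isOfFinOrder.2 ht).tendsto_cofinite.eventually (eventually_cofinite_ne a)

theorem not_isOfFinOrder_ulift_up {G : Type*} [Monoid G] {g : G} (hg : ¬IsOfFinOrder g) :
    ¬IsOfFinOrder (ULift.up g) := by
  rwa [← orderOf_pos_iff, ← MulEquiv.ulift.symm.orderOf_eq, orderOf_pos_iff] at hg

theorem exists_disjoint_translates_of_hom {G H α ι : Type*} [Group G] [Group H]
    [MulAction H α] (φ : G →* H) (a : α) {D : Set α} {F : Set G} {u : ι → G}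
    (hF : ∀ f ∈ F, Disjoint (φ f • D) D)
    (hu : Pairwise fun j k => Disjoint (φ (u j) • Dᶜ) (φ (u k) • Dᶜ)) :
    ∃ D' : Set G, (∀ f ∈ F, Disjoint ((f * ·) '' D') D') ∧
      Pairwise fun j k => Disjoint ((u j * ·) '' D'ᶜ) ((u k * ·) '' D'ᶜ) := by
  set p : G → α := fun g => φ g • a
  have image_mul_preimage (g : G) (S : Set α) : (g * ·) '' (p ⁻¹' S) ⊆ p ⁻¹' (φ g • S) := by
    rintro _ ⟨x, hx, rfl⟩
    exact ⟨p x, hx, by simp [p, mul_smul]⟩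
  refine ⟨p ⁻¹' D, fun f hf => ((hF f hf).preimage p).mono_left (image_mul_preimage f D),
    fun j k hjk => ?_⟩
  rw [← preimage_compl]
  exact ((hu hjk).preimage p).mono (image_mul_preimage _ _) (image_mul_preimage _ _)

namespace Monoid.CoprodI

variable {ι : Type*} {M : ι → Type*} [∀ i, Group (M i)]

namespace NeWord

def mulLast {i j : ι} (w : NeWord M i j) (x : M j) (hx : w.last * x ≠ 1) : NeWord M i j :=
  (w.inv.mulHead x⁻¹ (by rwa [inv_head, ← mul_inv_rev, inv_ne_one])).inv

@[simp]
theorem mulLast_prod {i j : ι} (w : NeWord M i j) (x : M j) (hx : w.last * x ≠ 1) :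
    (w.mulLast x hx).prod = w.prod * of x := by
  simp [mulLast, inv_prod, mulHead_prod]

theorem eventually_exists_prod_eq_conj_pow {k : ι} {t : M k} (ht : ¬IsOfFinOrder t) {i j : ι}
    (w : NeWord M i j) :
    ∀ᶠ n : ℕ in cofinite, ∃ w' : NeWord M k k, w'.prod = of (t ^ n) * w.prod * (of (t ^ n))⁻¹ := by
  by_cases hi : i = k <;> by_cases hj : j = k
  · subst hi hj
    cases w with
    | singleton x hx =>
      exact .of_forall fun n =>
        ⟨singleton (t ^ n * x * (t ^ n)⁻¹) (by simpa [conj_eq_one_iff]), by simp [map_mul]⟩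
    | append w₁ hne w₂ =>
      filter_upwards [eventually_pow_ne ht w₁.head⁻¹, eventually_pow_ne ht w₂.last] with n h₁ h₂
      refine ⟨append (w₁.mulHead (t ^ n) ?_) hne (w₂.mulLast (t ^ n)⁻¹ ?_), ?_⟩
      · rwa [ne_eq, mul_eq_one_iff_eq_inv]
      · rwa [ne_eq, mul_inv_eq_one, eq_comm]
      · simp [mul_assoc]
  · subst hi
    filter_upwards [eventually_pow_ne ht 1, eventually_pow_ne ht w.head⁻¹] with n h₁ h₂
    refine ⟨append (w.mulHead (t ^ n) ?_) hj (singleton (t ^ n)⁻¹ (inv_ne_one.2 h₁)), ?_⟩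
    · rwa [ne_eq, mul_eq_one_iff_eq_inv]
    · simp
  · subst hj
    filter_upwards [eventually_pow_ne ht 1, eventually_pow_ne ht w.last] with n h₁ h₂
    refine ⟨append (singleton (t ^ n) h₁) (Ne.symm hi) (w.mulLast (t ^ n)⁻¹ ?_), ?_⟩
    · rwa [ne_eq, mul_inv_eq_one, eq_comm]
    · simp [mul_assoc]
  · filter_upwards [eventually_pow_ne ht 1] with n hn
    exact ⟨append (append (singleton (t ^ n) hn) (Ne.symm hi) w) hj
      (singleton (t ^ n)⁻¹ (inv_ne_one.2 hn)), by simp⟩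

end NeWord

variable [DecidableEq ι] [∀ i, DecidableEq (M i)]

theorem exists_neWord_prod_eq {f : CoprodI M} (hf : f ≠ 1) :
    ∃ (i j : ι) (w : NeWord M i j), w.prod = f := by
  have hne : Word.equiv f ≠ Word.empty := fun h => hf (Word.equiv.injective (h.trans rfl))
  obtain ⟨i, j, w, hw⟩ := NeWord.of_word _ hne
  exact ⟨i, j, w, (congrArg Word.prod hw).trans (Word.equiv.symm_apply_apply f)⟩

theorem Word.fstIdx_of_smul {i : ι} {m : M i} (hm : m ≠ 1) {w : Word M}
    (hw : w.fstIdx ≠ some i) : (of m • w).fstIdx = some i := by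
  rw [← cons_eq_smul (h1 := hw) (h2 := hm), fstIdx_cons]

theorem NeWord.fstIdx_prod_smul {i j : ι} (w : NeWord M i j) {v : Word M}
    (hv : v.fstIdx ≠ some j) : (w.prod • v).fstIdx = some i := by
  induction w generalizing v with
  | singleton x hx => simpa using Word.fstIdx_of_smul hx hv
  | append w₁ hne w₂ ih₁ ih₂ =>
    rw [append_prod, mul_smul]
    exact ih₁ (by rw [ih₂ hv]; simpa using hne.symm)

theorem NeWord.disjoint_prod_smul {i k : ι} (hik : i ≠ k) (w : NeWord M k k) :
    Disjoint (w.prod • Word.fstIdx (M := M) ⁻¹' {some i}) (Word.fstIdx ⁻¹' {some i}) := by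
  rw [Set.disjoint_left]
  rintro _ ⟨v, hv, rfl⟩ hv'
  have hv : v.fstIdx = some i := hv
  have : (w.prod • v).fstIdx = some k := w.fstIdx_prod_smul (by rw [hv]; simpa using hik)
  exact hik (Option.some_injective _ (hv'.symm.trans this))

theorem eventually_disjoint_conj_pow_smul {i k : ι} (hik : i ≠ k) {t : M k}
    (ht : ¬IsOfFinOrder t) {f : CoprodI M} (hf : f ≠ 1) :
    ∀ᶠ n : ℕ in cofinite, Disjoint ((of t ^ n * f * (of t ^ n)⁻¹) • Word.fstIdx ⁻¹' {some i})
      (Word.fstIdx (M := M) ⁻¹' {some i}) := by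
  obtain ⟨i', j', w, rfl⟩ := exists_neWord_prod_eq hf
  filter_upwards [w.eventually_exists_prod_eq_conj_pow ht] with n ⟨w', hw'⟩
  rw [← map_pow, ← hw']
  exact w'.disjoint_prod_smul hik

theorem Word.pairwise_disjoint_pow_smul_compl {i : ι} {s : M i} (hs : ¬IsOfFinOrder s) :
    Pairwise fun j k : ℕ => Disjoint (of s ^ j • (fstIdx ⁻¹' {some i})ᶜ)
      (of s ^ k • (fstIdx (M := M) ⁻¹' {some i})ᶜ) := by
  intro j k hjk
  rw [Set.disjoint_smul_set_left, smul_smul, ← map_pow, ← map_pow, ← map_inv, ← map_mul,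
    Set.disjoint_compl_left_iff_subset]
  rintro _ ⟨w, hw, rfl⟩
  refine fstIdx_of_smul ?_ hw
  rw [ne_eq, inv_mul_eq_one]
  exact (injective_pow_iff_not_isOfFinOrder.2 hs).ne hjk

end Monoid.CoprodI

namespace Monoid.Coprod

universe u v

/-- `CoprodI` needs its factors in a single universe. -/
abbrev liftedFactors (Λ₁ : Type u) (Λ₂ : Type v) : Bool → Type max u v :=
  fun b => cond b (ULift.{u} Λ₂) (ULift.{v} Λ₁)

variable {Λ₁ : Type u} {Λ₂ : Type v} [Group Λ₁] [Group Λ₂]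

instance : ∀ b, Group (liftedFactors Λ₁ Λ₂ b)
  | false => inferInstanceAs (Group (ULift Λ₁))
  | true => inferInstanceAs (Group (ULift Λ₂))

def toCoprodI : Coprod Λ₁ Λ₂ →* CoprodI (liftedFactors Λ₁ Λ₂) :=
  lift ((CoprodI.of (i := false)).comp MulEquiv.ulift.symm.toMonoidHom)
    ((CoprodI.of (i := true)).comp MulEquiv.ulift.symm.toMonoidHom)

@[simp]
theorem toCoprodI_inl (a : Λ₁) :
    toCoprodI (inl a : Coprod Λ₁ Λ₂) = CoprodI.of (i := false) (ULift.up a) := rfl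

@[simp]
theorem toCoprodI_inr (a : Λ₂) :
    toCoprodI (inr a : Coprod Λ₁ Λ₂) = CoprodI.of (i := true) (ULift.up a) := rfl

def ofCoprodI : CoprodI (liftedFactors Λ₁ Λ₂) →* Coprod Λ₁ Λ₂ :=
  CoprodI.lift fun
    | false => inl.comp MulEquiv.ulift.toMonoidHom
    | true => inr.comp MulEquiv.ulift.toMonoidHom

theorem toCoprodI_injective : Function.Injective (toCoprodI : Coprod Λ₁ Λ₂ →* _) := by
  have : (ofCoprodI.comp toCoprodI : Coprod Λ₁ Λ₂ →* _) = .id _ := by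
    ext <;> simp [ofCoprodI, toCoprodI, CoprodI.lift_of]
  exact Function.LeftInverse.injective (DFunLike.congr_fun this)

end Monoid.Coprod

/-- Powers' lemma for free products: let `Λ = Λ₁ ∗ Λ₂` and let `s ∈ Λ₁`, `t ∈ Λ₂` be
of infinite order. For any finite subset `F ⊆ Λ ∖ {e}` there are a partition
`Λ = D ⊔ E` and elements `u₁, u₂, u₃` of the subgroup generated by `s` and `t` with
`fD ∩ D = ∅` for all `f ∈ F`, and `u_j E ∩ u_k E = ∅` for distinct `j, k`. -/
theorem powers_property_free_product (Λ₁ Λ₂ : Type*) [Group Λ₁] [Group Λ₂]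
    (s : Λ₁) (hs : ¬ IsOfFinOrder s) (t : Λ₂) (ht : ¬ IsOfFinOrder t)
    (F : Finset (Monoid.Coprod Λ₁ Λ₂)) (hF : ∀ f ∈ F, f ≠ 1) :
    ∃ D E : Set (Monoid.Coprod Λ₁ Λ₂), D ∪ E = Set.univ ∧ Disjoint D E ∧
      ∃ u : Fin 3 → Monoid.Coprod Λ₁ Λ₂,
        (∀ j, u j ∈ Subgroup.closure {Monoid.Coprod.inl s, Monoid.Coprod.inr t}) ∧
        (∀ f ∈ F, Disjoint ((fun d => f * d) '' D) D) ∧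
        ∀ j k : Fin 3, j ≠ k →
          Disjoint ((fun d => u j * d) '' E) ((fun d => u k * d) '' E) := by
  classical
  obtain ⟨n, hn⟩ := ((eventually_all_finset F).2 fun f hf =>
    CoprodI.eventually_disjoint_conj_pow_smul Bool.false_ne_true (not_isOfFinOrder_ulift_up ht)
      ((map_ne_one_iff _ Coprod.toCoprodI_injective).2 (hF f hf))).exists
  set c : Coprod Λ₁ Λ₂ := Coprod.inr t ^ n
  set u : Fin 3 → Coprod Λ₁ Λ₂ := fun j => c⁻¹ * Coprod.inl s ^ j.1 * c
  set φ := Coprod.toCoprodI.comp (MulAut.conj c).toMonoidHom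
  have hφ (g : Coprod Λ₁ Λ₂) : φ g = Coprod.toCoprodI (c * g * c⁻¹) := rfl
  obtain ⟨D, hD, hDu⟩ := exists_disjoint_translates_of_hom φ CoprodI.Word.empty
    (D := CoprodI.Word.fstIdx ⁻¹' {some false}) (F := F) (u := u)
    (fun f hf => by simpa [hφ, c] using hn f hf)
    (fun j k hjk => by
      simpa [hφ, u, mul_assoc] using CoprodI.Word.pairwise_disjoint_pow_smul_compl
        (not_isOfFinOrder_ulift_up hs) (Fin.val_injective.ne hjk))
  set K := Subgroup.closure {Coprod.inl s, Coprod.inr t}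
  have hsK : Coprod.inl s ∈ K := Subgroup.subset_closure (by simp)
  have hcK : c ∈ K := pow_mem (Subgroup.subset_closure (by simp)) n
  exact ⟨D, Dᶜ, union_compl_self D, disjoint_compl_right, u,
    fun j => mul_mem (mul_mem (inv_mem hcK) (pow_mem hsK _)) hcK, hD, fun j k h => hDu h⟩
end

section
/- Let Γ = ∗_{i∈ℕ} Γ_i be the free product of a countably infinite family of countable groups, each containing an element of infinite order, and let α ∈ S(Γ,X) be an action on the Cantor set X satisfying property R. Then α is minimal: every Γ-orbit is dense in X. -/
open TopologicalSpace

/-!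
Let `U` be a nonempty open set with `x ∉ U`. Since `X` has a basis of clopen sets, `U`
contains a nonempty clopen `W`, which is proper because `x ∉ W`. Property `R` applied
to the two-set family `W, Wᶜ` yields a group element mapping `Wᶜ` onto `W`, and in particular
moving `x` into `U`.
-/

theorem PropertyR.exists_image_compl_eq {G : ℕ → Type*} [∀ i, Group (G i)] {X : Type*}
    [TopologicalSpace X] {α : Monoid.CoprodI G →* (X ≃ₜ X)} (hR : PropertyR α) {W : Set X}
    (hW : IsClopen W) (hW_ne : W.Nonempty) (hWc_ne : Wᶜ.Nonempty) :
    ∃ g : Monoid.CoprodI G, α g '' Wᶜ = W := by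
  have hclopen : ∀ j : Fin 2, IsClopen (![W, Wᶜ] j) := Fin.forall_fin_two.mpr ⟨hW, hW.compl⟩
  have hne : ∀ j : Fin 2, (![W, Wᶜ] j).Nonempty := Fin.forall_fin_two.mpr ⟨hW_ne, hWc_ne⟩
  have hproper : ∀ j : Fin 2, ![W, Wᶜ] j ≠ Set.univ :=
    Fin.forall_fin_two.mpr ⟨Set.nonempty_compl.mp hWc_ne, Set.compl_ne_univ.mpr hW_ne⟩
  have hdisj : Pairwise (Function.onFun Disjoint ![W, Wᶜ]) := by
    intro i j hij
    fin_cases i <;> fin_cases j <;>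
      simp_all [Function.onFun, disjoint_compl_left, disjoint_compl_right]
  obtain ⟨i, s, -, hs⟩ := (hR 2 ![W, Wᶜ] hclopen hne hproper hdisj).nonempty
  exact ⟨Monoid.CoprodI.of s, hs 1⟩

theorem propertyR_implies_minimal_general (G : ℕ → Type*) [∀ i, Group (G i)]
    (X : Type*) [TopologicalSpace X] [CompactSpace X] [MetrizableSpace X]
    [TotallyDisconnectedSpace X]
    (α : Monoid.CoprodI G →* (X ≃ₜ X)) (hR : PropertyR α) :
    ∀ x : X, Dense {y : X | ∃ s : Monoid.CoprodI G, α s x = y} := by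
  intro x
  rw [dense_iff_inter_open]
  rintro U hU ⟨y, hy⟩
  by_cases hxU : x ∈ U
  · exact ⟨x, hxU, 1, by rw [map_one]; rfl⟩
  obtain ⟨W, ⟨hyW, hW⟩, hWU⟩ := (nhds_basis_clopen y).mem_iff.mp (hU.mem_nhds hy)
  have hxW : x ∈ Wᶜ := fun hx => hxU (hWU hx)
  obtain ⟨g, hg⟩ := hR.exists_image_compl_eq hW ⟨y, hyW⟩ ⟨x, hxW⟩
  exact ⟨α g x, hWU (hg ▸ Set.mem_image_of_mem _ hxW), g, rfl⟩

/-- Let `Γ = ∗_{i∈ℕ} G i` be the free product of countably many countable groups,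
each containing an element of infinite order, and let `α` be a Cantor system of `Γ`
with property `R`. Then `α` is minimal: every `Γ`-orbit is dense in `X`. -/
theorem propertyR_implies_minimal (G : ℕ → Type*) [∀ i, Group (G i)]
    [∀ i, Countable (G i)] (htf : ∀ i, ∃ s : G i, ¬ IsOfFinOrder s)
    (X : Type*) [TopologicalSpace X] [CompactSpace X] [MetrizableSpace X]
    [TotallyDisconnectedSpace X] [PerfectSpace X] [Nonempty X]
    (α : Monoid.CoprodI G →* (X ≃ₜ X)) (hR : PropertyR α) :
    ∀ x : X, Dense {y : X | ∃ s : Monoid.CoprodI G, α s x = y} :=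
  propertyR_implies_minimal_general G X α hR
end
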